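/- arXiv:2407.04540 — 6 statements merged into one kernel-verified Lean document; each statement's English description precedes it below -/
import Mathlib

section
/- For every natural number s and every real x, the expectation of Φ_t(x) when t is a sum of s independent uniform ±1 random variables equals x^s; equivalently, 2^{−s} · ∑_{j=0}^{s} binom(s,j) · Φ_{|2j−s|}(x) = x^s. -/
/-- Φ_t, the Chebyshev polynomial of the first kind over ℝ (indexed by ℤ,
with Φ_{-t} = Φ_t): Φ_0(x)=1, Φ_1(x)=x, Φ_{t+1}(x)=2x·Φ_t(x)−Φ_{t−1}(x). -/
noncomputable def Phi (t : ℤ) : Polynomial ℝ := Polynomial.Chebyshev.T ℝ t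

/-!
Let `N` be the operator `(N f) n = f (n + 1) + f (n - 1)` on sequences `ℤ → M`. It is the sum of
two commuting shifts, so the binomial theorem gives `(N ^ s f) 0 = ∑ j, (s choose j) • f (2j - s)`:
up to the factor `2 ^ s` this is the expectation of `f t` for `t ∼ D_s`. The three-term recurrence
says exactly that `n ↦ Φ_n(x)` is an eigenvector of `N` with eigenvalue `2x`, so evaluating
`N ^ s Φ(x) = (2x) ^ s Φ(x)` at `0` gives the claim, as `Φ_0 = 1` and `Φ_{-t} = Φ_t`.
-/

open Finset Polynomial Module

section Shift

variable (R M : Type*) [Semiring R] [AddCommMonoid M] [Module R M]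

def intShift (k : ℤ) : End R (ℤ → M) := LinearMap.funLeft R M (· + k)

def neighborSum : End R (ℤ → M) := intShift R M 1 + intShift R M (-1)

variable {R M}

@[simp]
theorem intShift_apply (k : ℤ) (f : ℤ → M) (n : ℤ) : intShift R M k f n = f (n + k) := rfl

theorem neighborSum_apply (f : ℤ → M) (n : ℤ) :
    neighborSum R M f n = f (n + 1) + f (n - 1) := rfl

theorem intShift_mul (k l : ℤ) : intShift R M k * intShift R M l = intShift R M (k + l) := by
  ext f n
  simp [add_comm k l, add_assoc]

theorem intShift_pow (k : ℤ) (j : ℕ) : intShift R M k ^ j = intShift R M (j * k) := by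
  induction j with
  | zero => ext; simp
  | succ j ih =>
    rw [pow_succ, ih, intShift_mul]
    congr 1
    push_cast
    ring

theorem commute_intShift (k l : ℤ) : Commute (intShift R M k) (intShift R M l) := by
  rw [Commute, SemiconjBy, intShift_mul, intShift_mul, add_comm]

theorem neighborSum_pow_apply (s : ℕ) (f : ℤ → M) (n : ℤ) :
    (neighborSum R M ^ s) f n = ∑ j ∈ range (s + 1), s.choose j • f (n + (2 * j - s)) := by
  rw [neighborSum, (commute_intShift 1 (-1)).add_pow, LinearMap.sum_apply, Finset.sum_apply]
  refine sum_congr rfl fun j hj => ?_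
  have hjs : j ≤ s := Nat.lt_succ_iff.mp (mem_range.mp hj)
  simp only [intShift_pow, intShift_mul, End.mul_apply, End.natCast_apply, Pi.smul_apply,
    intShift_apply, Nat.cast_sub hjs]
  congr 2
  ring

end Shift

theorem hasEigenvector_neighborSum_eval_T {R : Type*} [CommRing R] [Nontrivial R] (x : R) :
    (neighborSum R R).HasEigenvector (2 * x) (fun n => (Chebyshev.T R n).eval x) := by
  refine ⟨End.mem_eigenspace_iff.mpr (funext fun n => ?_), fun h => ?_⟩
  · simp only [neighborSum_apply, Pi.smul_apply, smul_eq_mul, Chebyshev.T_add_one, eval_sub,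
      eval_mul, eval_X, eval_ofNat]
    ring
  · simpa using congrFun h 0

/-- The expectation of Φ_t(x), where t is a sum of s i.i.d. uniform ±1 random
variables, equals x^s:  2^{−s} · ∑_{j=0}^{s} binom(s,j) · Φ_{|2j−s|}(x) = x^s. -/
theorem chebyshev_binomial_expectation (s : ℕ) (x : ℝ) :
    ((2 : ℝ) ^ s)⁻¹ *
      ∑ j ∈ Finset.range (s + 1),
        (s.choose j : ℝ) * (Phi |2 * (j : ℤ) - s|).eval x = x ^ s := by
  have key := congrFun ((hasEigenvector_neighborSum_eval_T x).pow_apply s) 0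
  simp only [neighborSum_pow_apply, zero_add, Pi.smul_apply, Chebyshev.T_zero, eval_one,
    smul_eq_mul, mul_one, nsmul_eq_mul] at key
  simp only [Phi, Int.abs_eq_natAbs, Chebyshev.T_natAbs, key, mul_pow]
  field_simp
end

section
/- For all natural numbers 0 ≤ r ≤ s and all real x with |x| ≤ 1, we have |G_{r,s}(x) − x^s| ≤ 2·e^{−r²/(2s)}. -/
open Polynomial Chebyshev Finset

lemma T_abs_le (n : ℤ) (x : ℝ) (hx : |x| ≤ 1) : |(Polynomial.Chebyshev.T ℝ n).eval x| ≤ 1 := by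
  rw [abs_le] at hx
  have : x = Real.cos (Real.arccos x) := (Real.cos_arccos hx.1 hx.2).symm
  rw [this, Polynomial.Chebyshev.T_real_cos]
  exact Real.abs_cos_le_one _

lemma pow_identity (s : ℕ) (x : ℝ) :
    ∑ j ∈ Finset.range (s + 1),
      (s.choose j : ℝ) * (Polynomial.Chebyshev.T ℝ (2 * (j : ℤ) - s)).eval x
      = 2 ^ s * x ^ s := by
  induction s with
  | zero => simp
  | succ s ih =>
    set g : ℕ → ℝ := fun j => (Polynomial.Chebyshev.T ℝ (2 * (j : ℤ) - (s + 1))).eval x with hg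
    have key : ∀ j : ℕ, 2 * x * (Polynomial.Chebyshev.T ℝ (2 * (j : ℤ) - s)).eval x
        = g (j + 1) + g j := by
      intro j
      have h := Polynomial.Chebyshev.T_mul_T ℝ 1 (2 * (j : ℤ) - s)
      have h2 := congrArg (Polynomial.eval x) h
      simp only [Polynomial.eval_mul, Polynomial.eval_ofNat, Polynomial.Chebyshev.T_one,
        Polynomial.eval_X] at h2
      have e1 : (1 : ℤ) + (2 * (j : ℤ) - s) = 2 * ((j : ℤ) + 1) - (s + 1) := by ring
      have e2 : (1 : ℤ) - (2 * (j : ℤ) - s) = -(2 * (j : ℤ) - (s + 1)) := by ring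
      rw [e1, e2, Polynomial.Chebyshev.T_neg] at h2
      simpa [hg] using h2
    have step : ∑ j ∈ Finset.range (s + 2), ((s + 1).choose j : ℝ) * g j
        = ∑ j ∈ Finset.range (s + 1), (s.choose j : ℝ) * g (j + 1)
          + ∑ j ∈ Finset.range (s + 1), (s.choose j : ℝ) * g j := by
      rw [Finset.sum_range_succ' (fun j => ((s + 1).choose j : ℝ) * g j)]
      have : ∀ i : ℕ, (((s + 1).choose (i + 1) : ℕ) : ℝ) = (s.choose i : ℝ) + (s.choose (i + 1) : ℝ) := by
        intro i
        rw [Nat.choose_succ_succ]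
        push_cast; ring
      calc ∑ i ∈ Finset.range (s + 1), (((s + 1).choose (i + 1) : ℕ) : ℝ) * g (i + 1)
            + (((s + 1).choose 0 : ℕ) : ℝ) * g 0
          = ∑ i ∈ Finset.range (s + 1), ((s.choose i : ℝ) + (s.choose (i + 1) : ℝ)) * g (i + 1)
            + (s.choose 0 : ℝ) * g 0 := by
            simp only [this]; norm_num
        _ = ∑ i ∈ Finset.range (s + 1), (s.choose i : ℝ) * g (i + 1)
            + (∑ i ∈ Finset.range (s + 1), (s.choose (i + 1) : ℝ) * g (i + 1)
              + (s.choose 0 : ℝ) * g 0) := by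
            simp only [add_mul, Finset.sum_add_distrib]; ring
        _ = ∑ i ∈ Finset.range (s + 1), (s.choose i : ℝ) * g (i + 1)
            + ∑ j ∈ Finset.range (s + 2), (s.choose j : ℝ) * g j := by
            rw [Finset.sum_range_succ' (fun j => (s.choose j : ℝ) * g j)]
        _ = _ := by
            congr 1
            rw [Finset.sum_range_succ]
            simp [Nat.choose_succ_self]
    have sub1 : ∀ j, g (j + 1) = (Polynomial.Chebyshev.T ℝ (2 * (j : ℤ) - s + 1)).eval x := by
      intro j; simp only [hg]; congr 2; push_cast; ring
    calc ∑ j ∈ Finset.range (s + 1 + 1), ((s + 1).choose j : ℝ)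
            * (Polynomial.Chebyshev.T ℝ (2 * (j : ℤ) - (s + 1 : ℕ))).eval x
        = ∑ j ∈ Finset.range (s + 2), ((s + 1).choose j : ℝ) * g j := by
          apply Finset.sum_congr rfl; intro j _; simp only [hg]; push_cast; ring_nf
      _ = ∑ j ∈ Finset.range (s + 1), (s.choose j : ℝ) * (g (j + 1) + g j) := by
          rw [step, ← Finset.sum_add_distrib]
          apply Finset.sum_congr rfl; intro j _; ring
      _ = 2 * x * ∑ j ∈ Finset.range (s + 1), (s.choose j : ℝ)
            * (Polynomial.Chebyshev.T ℝ (2 * (j : ℤ) - s)).eval x := by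
          rw [Finset.mul_sum]
          apply Finset.sum_congr rfl; intro j _
          rw [← key j]; ring
      _ = 2 ^ (s + 1) * x ^ (s + 1) := by rw [ih]; ring

lemma mgf_sum (s : ℕ) (μ : ℝ) :
    ∑ j ∈ Finset.range (s + 1), (s.choose j : ℝ) * Real.exp (μ * (2 * (j : ℝ) - s))
      = (Real.exp μ + Real.exp (-μ)) ^ s := by
  rw [add_pow]
  apply Finset.sum_congr rfl
  intro j hj
  have hjs : j ≤ s := Nat.lt_succ_iff.mp (Finset.mem_range.mp hj)
  rw [← Real.exp_nat_mul, ← Real.exp_nat_mul, ← Real.exp_add]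
  have : ((s - j : ℕ) : ℝ) = (s : ℝ) - j := by
    rw [Nat.cast_sub hjs]
  rw [this]
  ring_nf

lemma tail_bound (r s : ℕ) (hs : 0 < s) :
    ∑ j ∈ Finset.range (s + 1),
      (if |2 * (j : ℤ) - s| ≤ (r : ℤ) then 0 else (s.choose j : ℝ))
      ≤ 2 ^ (s + 1) * Real.exp (-(r : ℝ) ^ 2 / (2 * s)) := by
  set μ : ℝ := r / s with hμ
  have hμ0 : 0 ≤ μ := by positivity
  have pointwise : ∀ j ∈ Finset.range (s + 1),
      (if |2 * (j : ℤ) - s| ≤ (r : ℤ) then 0 else (s.choose j : ℝ))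
      ≤ Real.exp (-(μ * r)) * ((s.choose j : ℝ) * (Real.exp (μ * (2 * (j : ℝ) - s))
          + Real.exp (-(μ * (2 * (j : ℝ) - s))))) := by
    intro j _
    split_ifs with h
    · positivity
    · push_neg at h
      set t : ℝ := 2 * (j : ℝ) - s with ht
      have habs : (r : ℝ) ≤ |t| := by
        have h2 : ((r : ℤ) : ℝ) < ((|2 * (j : ℤ) - s| : ℤ) : ℝ) := Int.cast_lt.mpr h
        push_cast at h2
        rw [ht]
        exact h2.le
      have key : Real.exp (μ * r) ≤ Real.exp (μ * t) + Real.exp (-(μ * t)) := by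
        have h1 : Real.exp (μ * r) ≤ Real.exp (μ * |t|) :=
          Real.exp_le_exp.mpr (by nlinarith)
        have h2 : Real.exp (μ * |t|) = Real.exp (μ * t)
            ∨ Real.exp (μ * |t|) = Real.exp (-(μ * t)) := by
          rcases abs_cases t with ⟨he, _⟩ | ⟨he, _⟩
          · left; rw [he]
          · right; rw [he]; ring_nf
        have p1 := (Real.exp_pos (μ * t)).le
        have p2 := (Real.exp_pos (-(μ * t))).le
        rcases h2 with h2 | h2 <;> nlinarith
      have hx : Real.exp (-(μ * r)) * Real.exp (μ * r) = 1 := by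
        rw [← Real.exp_add]; simp
      have e := (Real.exp_pos (-(μ * r))).le
      have main := mul_le_mul_of_nonneg_left
        (mul_le_mul_of_nonneg_left key (Nat.cast_nonneg (s.choose j))) e
      nlinarith [Nat.cast_nonneg (α := ℝ) (s.choose j)]
  calc ∑ j ∈ Finset.range (s + 1), (if |2 * (j : ℤ) - s| ≤ (r : ℤ) then 0 else (s.choose j : ℝ))
      ≤ ∑ j ∈ Finset.range (s + 1), Real.exp (-(μ * r)) * ((s.choose j : ℝ)
          * (Real.exp (μ * (2 * (j : ℝ) - s)) + Real.exp (-(μ * (2 * (j : ℝ) - s))))) :=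
        Finset.sum_le_sum pointwise
    _ = Real.exp (-(μ * r)) * ((Real.exp μ + Real.exp (-μ)) ^ s
          + (Real.exp (-μ) + Real.exp (-(-μ))) ^ s) := by
        rw [← Finset.mul_sum]
        congr 1
        rw [← mgf_sum s μ, ← mgf_sum s (-μ), ← Finset.sum_add_distrib]
        apply Finset.sum_congr rfl
        intro j _
        ring_nf
    _ ≤ Real.exp (-(μ * r)) * (2 * (2 * Real.exp (μ ^ 2 / 2)) ^ s) := by
        apply mul_le_mul_of_nonneg_left _ (Real.exp_pos _).le
        have hc : Real.exp μ + Real.exp (-μ) ≤ 2 * Real.exp (μ ^ 2 / 2) := by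
          have := Real.cosh_le_exp_half_sq μ
          rw [Real.cosh_eq] at this
          linarith
        have hc' : Real.exp (-μ) + Real.exp (-(-μ)) ≤ 2 * Real.exp (μ ^ 2 / 2) := by
          rw [neg_neg]; linarith
        have h1 : (Real.exp μ + Real.exp (-μ)) ^ s ≤ (2 * Real.exp (μ ^ 2 / 2)) ^ s :=
          pow_le_pow_left₀ (by positivity) hc s
        have h2 : (Real.exp (-μ) + Real.exp (-(-μ))) ^ s ≤ (2 * Real.exp (μ ^ 2 / 2)) ^ s :=
          pow_le_pow_left₀ (by positivity) hc' s
        linarith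
    _ = 2 ^ (s + 1) * Real.exp (-(μ * r) + s * (μ ^ 2 / 2)) := by
        rw [mul_pow, ← Real.exp_nat_mul, Real.exp_add]
        ring
    _ = 2 ^ (s + 1) * Real.exp (-(r : ℝ) ^ 2 / (2 * s)) := by
        congr 2
        rw [hμ]
        field_simp
        ring

/-- G_{r,s}(x) = E_{t∼D_s}[Φ_t(x)·1{|t| ≤ r}]
  = 2^{−s} ∑_{j=0}^{s} binom(s,j)·Φ_{2j−s}(x)·1{|2j−s| ≤ r}. -/
noncomputable def G (r s : ℕ) : Polynomial ℝ :=
  ((2 : ℝ) ^ s)⁻¹ • ∑ j ∈ Finset.range (s + 1),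
    (s.choose j : ℝ) • (if |2 * (j : ℤ) - s| ≤ (r : ℤ) then Phi (2 * j - s) else 0)

/-- For 0 ≤ r ≤ s and |x| ≤ 1, |G_{r,s}(x) − x^s| ≤ 2·e^{−r²/(2s)}. -/
theorem G_approx_pow (r s : ℕ) (hrs : r ≤ s) (x : ℝ) (hx : |x| ≤ 1) :
    |(G r s).eval x - x ^ s| ≤ 2 * Real.exp (-(r : ℝ) ^ 2 / (2 * s)) := by
  rcases Nat.eq_zero_or_pos s with hs | hs
  · subst hs
    interval_cases r
    simp [G, Phi, Polynomial.Chebyshev.T_zero]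
  · have hG : (G r s).eval x = ((2 : ℝ) ^ s)⁻¹ * ∑ j ∈ Finset.range (s + 1),
        (s.choose j : ℝ) * (if |2 * (j : ℤ) - s| ≤ (r : ℤ)
          then (Polynomial.Chebyshev.T ℝ (2 * (j : ℤ) - s)).eval x else 0) := by
      simp only [G, Phi, Polynomial.eval_smul, Polynomial.eval_finset_sum,
        apply_ite (Polynomial.eval x), Polynomial.eval_zero, smul_eq_mul]
    have hxs : x ^ s = ((2 : ℝ) ^ s)⁻¹ * ∑ j ∈ Finset.range (s + 1),
        (s.choose j : ℝ) * (Polynomial.Chebyshev.T ℝ (2 * (j : ℤ) - s)).eval x := by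
      rw [pow_identity s x, inv_mul_cancel_left₀ (by positivity)]
    have hdiff : (G r s).eval x - x ^ s = ((2 : ℝ) ^ s)⁻¹
        * ∑ j ∈ Finset.range (s + 1), (if |2 * (j : ℤ) - s| ≤ (r : ℤ) then 0
            else -((s.choose j : ℝ) * (Polynomial.Chebyshev.T ℝ (2 * (j : ℤ) - s)).eval x)) := by
      rw [hG, hxs, ← mul_sub, ← Finset.sum_sub_distrib]
      congr 1
      apply Finset.sum_congr rfl
      intro j _
      split_ifs <;> ring
    calc |(G r s).eval x - x ^ s|
        = ((2 : ℝ) ^ s)⁻¹ * |∑ j ∈ Finset.range (s + 1),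
            (if |2 * (j : ℤ) - s| ≤ (r : ℤ) then 0
              else -((s.choose j : ℝ) * (Polynomial.Chebyshev.T ℝ (2 * (j : ℤ) - s)).eval x))| := by
          rw [hdiff, abs_mul, abs_of_nonneg (by positivity)]
      _ ≤ ((2 : ℝ) ^ s)⁻¹ * ∑ j ∈ Finset.range (s + 1),
            (if |2 * (j : ℤ) - s| ≤ (r : ℤ) then 0 else (s.choose j : ℝ)) := by
          apply mul_le_mul_of_nonneg_left _ (by positivity)
          refine le_trans (Finset.abs_sum_le_sum_abs _ _) (Finset.sum_le_sum ?_)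
          intro j _
          split_ifs with h
          · simp
          · rw [abs_neg, abs_mul, abs_of_nonneg (Nat.cast_nonneg _)]
            have := T_abs_le (2 * (j : ℤ) - s) x hx
            nlinarith [Nat.cast_nonneg (α := ℝ) (s.choose j), abs_nonneg ((Polynomial.Chebyshev.T ℝ (2 * (j : ℤ) - s)).eval x)]
      _ ≤ ((2 : ℝ) ^ s)⁻¹ * (2 ^ (s + 1) * Real.exp (-(r : ℝ) ^ 2 / (2 * s))) :=
          mul_le_mul_of_nonneg_left (tail_bound r s hs) (by positivity)
      _ = 2 * Real.exp (-(r : ℝ) ^ 2 / (2 * s)) := by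
          rw [pow_succ]
          field_simp
end

section
/- Let s ≥ 2 be an even natural number. Then for all natural numbers 0 ≤ r ≤ s and all real x with |x| ≥ 1, we have 0 ≤ G_{r,s}(x) ≤ min(|x|^s, (2|x|)^r). -/
open Polynomial Polynomial.Chebyshev Real Finset

/-!
Since `s` is even, every index `t = 2j - s` is even, so `Φ_t(x) = Φ_t(|x|)`; writing
`|x| = cosh θ` gives `Φ_t(x) = cosh (t θ)`, which lies between `1` and `(2 cosh θ)^|t|`.
Hence all terms of `G_{r,s}(x)` are nonnegative, and dropping the condition `|t| ≤ r` only
increases it, up to `2^{-s} ∑_j (s choose j) cosh ((2j - s) θ) = cosh^s θ = |x|^s`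
(the binomial theorem for `(e^θ + e^{-θ})^s`). Bounding each kept term by `(2|x|)^r` instead
gives the second bound.
-/

lemma Phi_eval_cosh (t : ℤ) (θ : ℝ) : (Phi t).eval (cosh θ) = cosh (t * θ) :=
  T_real_cosh θ t

lemma Phi_eval_neg_of_even {t : ℤ} (ht : Even t) (x : ℝ) :
    (Phi t).eval (-x) = (Phi t).eval x := by
  simp [Phi, T_eval_neg, Int.negOnePow_even t ht]

lemma Phi_eval_abs_of_even {t : ℤ} (ht : Even t) (x : ℝ) :
    (Phi t).eval |x| = (Phi t).eval x := by
  rcases abs_choice x with h | h <;> rw [h]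
  exact Phi_eval_neg_of_even ht x

lemma cosh_le_exp_abs (u : ℝ) : cosh u ≤ exp |u| := by
  rw [← cosh_abs, cosh_eq]
  linarith [exp_le_exp.2 (show -|u| ≤ |u| by linarith [abs_nonneg u])]

lemma exp_abs_le_two_mul_cosh (u : ℝ) : exp |u| ≤ 2 * cosh u := by
  rw [← cosh_abs, cosh_eq]
  linarith [exp_pos (-|u|)]

lemma cosh_int_mul_le_two_mul_cosh_pow (t : ℤ) (θ : ℝ) :
    cosh (t * θ) ≤ (2 * cosh θ) ^ t.natAbs := calc
  cosh (t * θ) ≤ exp |t * θ| := cosh_le_exp_abs _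
  _ = exp |θ| ^ t.natAbs := by
    rw [← exp_nat_mul, abs_mul, Nat.cast_natAbs, Int.cast_abs]
  _ ≤ (2 * cosh θ) ^ t.natAbs := by gcongr; exact exp_abs_le_two_mul_cosh θ

lemma sum_choose_mul_exp (s : ℕ) (u : ℝ) :
    ∑ j ∈ range (s + 1), (s.choose j : ℝ) * exp ((2 * j - s) * u) = (exp u + exp (-u)) ^ s := by
  rw [add_pow]
  refine sum_congr rfl fun j hj => ?_
  rw [← exp_nat_mul, ← exp_nat_mul, ← exp_add,
    Nat.cast_sub (Nat.lt_succ_iff.1 (mem_range.1 hj))]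
  ring_nf

lemma sum_choose_mul_cosh (s : ℕ) (θ : ℝ) :
    ∑ j ∈ range (s + 1), (s.choose j : ℝ) * cosh ((2 * j - s) * θ) = (2 * cosh θ) ^ s := by
  have h₁ := sum_choose_mul_exp s θ
  have h₂ := sum_choose_mul_exp s (-θ)
  simp only [mul_neg, neg_neg] at h₂
  simp only [cosh_eq, mul_div_assoc', mul_add, ← sum_div, sum_add_distrib, h₁, h₂]
  ring

lemma sum_choose_smul_Phi (s : ℕ) :
    ∑ j ∈ range (s + 1), (s.choose j : ℝ) • Phi (2 * j - s) = (2 * X) ^ s := by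
  refine eq_of_infinite_eval_eq _ _ ((Set.Ici_infinite 1).mono fun y hy => ?_)
  obtain ⟨θ, rfl⟩ : ∃ θ, cosh θ = y := ⟨arcosh y, cosh_arcosh hy⟩
  simp [eval_finsetSum, Phi_eval_cosh, sum_choose_mul_cosh]

lemma sum_choose_mul_Phi_eval (s : ℕ) (x : ℝ) :
    ∑ j ∈ range (s + 1), (s.choose j : ℝ) * (Phi (2 * j - s)).eval x = (2 * x) ^ s := by
  simpa [eval_finsetSum] using congrArg (eval x) (sum_choose_smul_Phi s)

lemma one_le_Phi_eval_of_even {t : ℤ} (ht : Even t) {x : ℝ} (hx : 1 ≤ |x|) :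
    1 ≤ (Phi t).eval x := by
  rw [← Phi_eval_abs_of_even ht, ← cosh_arcosh hx, Phi_eval_cosh]
  exact one_le_cosh _

lemma Phi_eval_le_of_even {t : ℤ} {n : ℕ} (ht : Even t) (htn : |t| ≤ n) {x : ℝ}
    (hx : 1 ≤ |x|) : (Phi t).eval x ≤ (2 * |x|) ^ n := by
  obtain ⟨θ, hθ⟩ : ∃ θ, cosh θ = |x| := ⟨arcosh |x|, cosh_arcosh hx⟩
  calc (Phi t).eval x = cosh (t * θ) := by rw [← Phi_eval_abs_of_even ht, ← hθ, Phi_eval_cosh]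
    _ ≤ (2 * |x|) ^ t.natAbs := hθ ▸ cosh_int_mul_le_two_mul_cosh_pow t θ
    _ ≤ (2 * |x|) ^ n := by
      rw [Int.abs_eq_natAbs] at htn
      exact pow_le_pow_right₀ (by linarith) (by omega)

lemma eval_G (r s : ℕ) (x : ℝ) :
    (G r s).eval x = (2 ^ s)⁻¹ * ∑ j ∈ range (s + 1) with |2 * ((j : ℕ) : ℤ) - s| ≤ r,
      (s.choose j : ℝ) * (Phi (2 * j - s)).eval x := by
  simp [G, eval_finsetSum, sum_filter, apply_ite]

theorem G_bound_large_general (r s : ℕ) (hse : Even s)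
    (x : ℝ) (hx : 1 ≤ |x|) :
    0 ≤ (G r s).eval x ∧ (G r s).eval x ≤ min (|x| ^ s) ((2 * |x|) ^ r) := by
  have heven (j : ℕ) : Even (2 * (j : ℤ) - s) := (even_two_mul _).sub hse.natCast
  have hterm_nonneg (j : ℕ) : 0 ≤ (s.choose j : ℝ) * (Phi (2 * j - s)).eval x :=
    mul_nonneg (by positivity) (zero_le_one.trans (one_le_Phi_eval_of_even (heven j) hx))
  rw [eval_G]
  refine ⟨mul_nonneg (by positivity) (sum_nonneg fun j _ => hterm_nonneg j), le_min ?_ ?_⟩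
  · calc _ ≤ (2 ^ s)⁻¹ * ∑ j ∈ range (s + 1), (s.choose j : ℝ) * (Phi (2 * j - s)).eval x := by
          gcongr ?_ * ?_
          exact sum_le_sum_of_subset_of_nonneg (filter_subset _ _) fun j _ _ => hterm_nonneg j
      _ = |x| ^ s := by
          rw [sum_choose_mul_Phi_eval, mul_pow, inv_mul_cancel_left₀ (by positivity), hse.pow_abs]
  · calc _ ≤ (2 ^ s)⁻¹ * ∑ j ∈ range (s + 1) with |2 * ((j : ℕ) : ℤ) - s| ≤ r,
            (s.choose j : ℝ) * (2 * |x|) ^ r := by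
          gcongr with j hj
          exact Phi_eval_le_of_even (heven j) (mem_filter.1 hj).2 hx
      _ ≤ (2 ^ s)⁻¹ * ∑ j ∈ range (s + 1), (s.choose j : ℝ) * (2 * |x|) ^ r := by
          gcongr ?_ * ?_
          exact sum_le_sum_of_subset_of_nonneg (filter_subset _ _) fun j _ _ => by positivity
      _ = (2 * |x|) ^ r := by
          rw [← sum_mul, ← Nat.cast_sum, Nat.sum_range_choose, Nat.cast_pow, Nat.cast_ofNat,
            inv_mul_cancel_left₀ (by positivity)]

/-- For even s ≥ 2, 0 ≤ r ≤ s, and |x| ≥ 1: 0 ≤ G_{r,s}(x) ≤ min(|x|^s, (2|x|)^r). -/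
theorem G_bound_large (r s : ℕ) (hs2 : 2 ≤ s) (hse : Even s) (hrs : r ≤ s)
    (x : ℝ) (hx : 1 ≤ |x|) :
    0 ≤ (G r s).eval x ∧ (G r s).eval x ≤ min (|x| ^ s) ((2 * |x|) ^ r) :=
  G_bound_large_general r s hse x hx
end

section
/- Let s ≥ 2 be an even natural number and 0 ≤ r ≤ s. Then for all real x ≥ 1, we have 0 ≤ G_{r,s}'(x) ≤ (s/x)·G_{r,s}(x), where G_{r,s}' is the derivative of G_{r,s}. -/
namespace GDerivAux

open Polynomial Polynomial.Chebyshev Real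

lemma T_eval_cosh (n : ℤ) (θ : ℝ) :
    (T ℝ n).eval (Real.cosh θ) = Real.cosh ((n : ℝ) * θ) := by
  apply Complex.ofReal_injective
  rw [complex_ofReal_eval_T, Complex.ofReal_cosh, Complex.ofReal_cosh,
    ← Complex.cos_mul_I, T_complex_cos,
    show (n : ℂ) * (↑θ * Complex.I) = (↑((n : ℝ) * θ)) * Complex.I by push_cast; ring,
    Complex.cos_mul_I, ← Complex.ofReal_cosh]

lemma U_eval_cosh (n : ℤ) (θ : ℝ) :
    (U ℝ n).eval (Real.cosh θ) * Real.sinh θ = Real.sinh (((n : ℝ) + 1) * θ) := by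
  have h := U_complex_cos (↑θ * Complex.I) n
  rw [Complex.cos_mul_I, Complex.sin_mul_I,
    show ((n : ℂ) + 1) * (↑θ * Complex.I) = (↑(((n : ℝ) + 1) * θ)) * Complex.I by
      push_cast; ring, Complex.sin_mul_I] at h
  have h2 : (U ℂ n).eval (Complex.cosh ↑θ) * Complex.sinh ↑θ
      = Complex.sinh ↑(((n : ℝ) + 1) * θ) :=
    mul_right_cancel₀ Complex.I_ne_zero (by rw [← h]; ring)
  apply Complex.ofReal_injective
  rw [Complex.ofReal_mul, complex_ofReal_eval_U, Complex.ofReal_cosh, Complex.ofReal_sinh,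
    Complex.ofReal_sinh, h2]

lemma T_deriv_eval_cosh (n : ℤ) (θ : ℝ) :
    (Polynomial.derivative (T ℝ n)).eval (Real.cosh θ) * Real.sinh θ
      = (n : ℝ) * Real.sinh ((n : ℝ) * θ) := by
  rw [T_derivative_eq_U]
  have h := U_eval_cosh (n - 1) θ
  push_cast at h
  rw [show ((n : ℝ) - 1 + 1) = (n : ℝ) by ring] at h
  simp only [eval_mul, eval_intCast]
  rw [mul_assoc, h]

lemma key_mono (a b θ : ℝ) (ha : 0 ≤ a) (hab : a ≤ b) (hθ : 0 ≤ θ) :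
    a * Real.sinh (a * θ) * Real.cosh (b * θ) ≤ b * Real.sinh (b * θ) * Real.cosh (a * θ) := by
  have e1 := Real.sinh_add (b * θ) (a * θ)
  have e2 := Real.sinh_sub (b * θ) (a * θ)
  have p1 : 0 ≤ Real.sinh (b * θ + a * θ) := by
    rw [← Real.sinh_zero]
    exact Real.sinh_le_sinh.2 (by nlinarith)
  have p2 : 0 ≤ Real.sinh (b * θ - a * θ) := by
    rw [← Real.sinh_zero]
    exact Real.sinh_le_sinh.2 (by nlinarith)
  nlinarith [mul_nonneg (sub_nonneg.2 hab) p1, mul_nonneg (by linarith : (0:ℝ) ≤ a + b) p2]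

lemma abs_mul_sinh (c θ : ℝ) : c * Real.sinh (c * θ) = |c| * Real.sinh (|c| * θ) := by
  rcases abs_cases c with ⟨h, _⟩ | ⟨h, _⟩
  · rw [h]
  · rw [h, show -c * θ = -(c * θ) by ring, Real.sinh_neg]; ring

lemma cosh_abs (c θ : ℝ) : Real.cosh (c * θ) = Real.cosh (|c| * θ) := by
  rcases abs_cases c with ⟨h, _⟩ | ⟨h, _⟩
  · rw [h]
  · rw [h, show -c * θ = -(c * θ) by ring, Real.cosh_neg]

lemma exists_cosh {x : ℝ} (hx : 1 < x) : ∃ θ : ℝ, 0 < θ ∧ Real.cosh θ = x := by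
  have hsq : Real.sqrt (x ^ 2 - 1) ^ 2 = x ^ 2 - 1 := Real.sq_sqrt (by nlinarith)
  have hy1 : (0:ℝ) < x + Real.sqrt (x ^ 2 - 1) := by nlinarith [Real.sqrt_nonneg (x ^ 2 - 1)]
  refine ⟨Real.log (x + Real.sqrt (x ^ 2 - 1)), ?_, ?_⟩
  · apply Real.log_pos
    nlinarith [Real.sqrt_nonneg (x ^ 2 - 1)]
  · have hinv : (x + Real.sqrt (x ^ 2 - 1))⁻¹ = x - Real.sqrt (x ^ 2 - 1) :=
      inv_eq_of_mul_eq_one_right (by nlinarith)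
    rw [Real.cosh_eq, Real.exp_log hy1, Real.exp_neg, Real.exp_log hy1, hinv]
    ring

lemma sum_cosh (s : ℕ) (θ : ℝ) :
    ∑ j ∈ Finset.range (s + 1), (s.choose j : ℝ) * Real.cosh (((2 * (j:ℤ) - s : ℤ) : ℝ) * θ)
      = 2 ^ s * (Real.cosh θ) ^ s := by
  set y := Real.exp θ with hy
  have hy0 : 0 < y := Real.exp_pos θ
  have hterm : ∀ j ∈ Finset.range (s + 1),
      (s.choose j : ℝ) * Real.cosh (((2 * (j:ℤ) - s : ℤ) : ℝ) * θ)
        = (s.choose j : ℝ) * ((y ^ (2*j) + y ^ (2*(s-j))) / (2 * y ^ s)) := by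
    intro j hj
    have hjs : j ≤ s := Nat.lt_succ_iff.mp (Finset.mem_range.mp hj)
    congr 1
    have e1 : Real.exp (((2 * (j:ℤ) - s : ℤ) : ℝ) * θ) = y ^ (2*j) / y ^ s := by
      rw [show ((2 * (j:ℤ) - s : ℤ) : ℝ) * θ = ((2*j : ℕ) : ℝ) * θ - ((s : ℕ) : ℝ) * θ by
        push_cast; ring, Real.exp_sub, Real.exp_nat_mul, Real.exp_nat_mul]
    have e2 : Real.exp (-(((2 * (j:ℤ) - s : ℤ) : ℝ) * θ)) = y ^ (2*(s-j)) / y ^ s := by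
      rw [show -(((2 * (j:ℤ) - s : ℤ) : ℝ) * θ) = ((2*(s-j) : ℕ) : ℝ) * θ - ((s : ℕ) : ℝ) * θ by
        push_cast [Nat.cast_sub hjs]; ring, Real.exp_sub, Real.exp_nat_mul, Real.exp_nat_mul]
    rw [Real.cosh_eq, e1, e2, ← add_div]
    rw [div_div]
    congr 1
    ring
  rw [Finset.sum_congr rfl hterm]
  have hA : ∑ j ∈ Finset.range (s + 1), (s.choose j : ℝ) * y ^ (2*j) = (y ^ 2 + 1) ^ s := by
    rw [add_pow]
    refine Finset.sum_congr rfl fun j hj => ?_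
    rw [pow_mul]
    ring
  have hB : ∑ j ∈ Finset.range (s + 1), (s.choose j : ℝ) * y ^ (2*(s-j)) = (y ^ 2 + 1) ^ s := by
    have hrefl := Finset.sum_range_reflect (fun j => (s.choose j : ℝ) * y ^ (2*j)) (s + 1)
    rw [← hA, ← hrefl]
    refine Finset.sum_congr rfl fun j hj => ?_
    have hjs : j ≤ s := Nat.lt_succ_iff.mp (Finset.mem_range.mp hj)
    simp only [Nat.add_sub_cancel]
    rw [Nat.choose_symm hjs]
  have hsum : ∑ j ∈ Finset.range (s + 1),
      (s.choose j : ℝ) * ((y ^ (2*j) + y ^ (2*(s-j))) / (2 * y ^ s))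
      = ((∑ j ∈ Finset.range (s + 1), (s.choose j : ℝ) * y ^ (2*j))
        + ∑ j ∈ Finset.range (s + 1), (s.choose j : ℝ) * y ^ (2*(s-j))) / (2 * y ^ s) := by
    rw [← Finset.sum_add_distrib, Finset.sum_div]
    refine Finset.sum_congr rfl fun j _ => ?_
    ring
  rw [hsum, hA, hB]
  have hstep : 2 ^ s * (Real.cosh θ) ^ s * y ^ s = (y ^ 2 + 1) ^ s := by
    rw [Real.cosh_eq, Real.exp_neg, ← hy, ← mul_pow, ← mul_pow]
    congr 1
    field_simp
  rw [div_eq_iff (by positivity : (2 : ℝ) * y ^ s ≠ 0)]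
  rw [← hstep]
  ring

lemma sum_T_eq (s : ℕ) :
    ∑ j ∈ Finset.range (s + 1), (s.choose j : ℝ) • T ℝ (2 * (j : ℤ) - s)
      = ((2 : ℝ) ^ s) • (Polynomial.X : Polynomial ℝ) ^ s := by
  apply Polynomial.eq_of_infinite_eval_eq
  refine Set.Infinite.mono ?_ (Set.Ioi_infinite (1 : ℝ))
  intro x hx
  simp only [Set.mem_setOf_eq, eval_finset_sum, eval_smul, smul_eq_mul, eval_pow, eval_X]
  obtain ⟨θ, hθpos, hθ⟩ := exists_cosh (Set.mem_Ioi.mp hx)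
  have hterm : ∀ j ∈ Finset.range (s + 1),
      (s.choose j : ℝ) * (T ℝ (2 * (j:ℤ) - s)).eval x
        = (s.choose j : ℝ) * Real.cosh (((2 * (j:ℤ) - s : ℤ) : ℝ) * θ) := by
    intro j _
    rw [← hθ, T_eval_cosh]
  rw [Finset.sum_congr rfl hterm, sum_cosh, ← hθ]

/-- The quantity x·T'_t(x) − s·T_t(x). -/
noncomputable def phi (s : ℕ) (x : ℝ) (t : ℤ) : ℝ :=
  x * (Polynomial.derivative (T ℝ t)).eval x - (s : ℝ) * (T ℝ t).eval x

lemma phi_sinh (s : ℕ) {x : ℝ} (θ : ℝ) (hθ : Real.cosh θ = x) (v : ℤ) :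
    phi s x v * Real.sinh θ
      = (v : ℝ) * x * Real.sinh ((v : ℝ) * θ)
        - (s : ℝ) * Real.sinh θ * Real.cosh ((v : ℝ) * θ) := by
  have hd := T_deriv_eval_cosh v θ
  have he := T_eval_cosh v θ
  rw [hθ] at hd he
  unfold phi
  calc (x * (Polynomial.derivative (T ℝ v)).eval x - (s : ℝ) * (T ℝ v).eval x) * Real.sinh θ
      = x * ((Polynomial.derivative (T ℝ v)).eval x * Real.sinh θ)
        - (s : ℝ) * Real.sinh θ * (T ℝ v).eval x := by ring
    _ = x * ((v : ℝ) * Real.sinh ((v : ℝ) * θ))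
        - (s : ℝ) * Real.sinh θ * Real.cosh ((v : ℝ) * θ) := by rw [hd, he]
    _ = _ := by ring

lemma phi_mono (s : ℕ) {x : ℝ} (θ : ℝ) (hθpos : 0 < θ) (hθ : Real.cosh θ = x)
    (t u : ℤ) (htu : |t| ≤ |u|) (h : 0 ≤ phi s x t) : 0 ≤ phi s x u := by
  have hx0 : (0:ℝ) < x := hθ ▸ Real.cosh_pos θ
  have hsθ : 0 < Real.sinh θ := by
    rw [← Real.sinh_zero]; exact Real.sinh_lt_sinh.2 hθpos
  set a : ℝ := |(t : ℝ)| with ha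
  set b : ℝ := |(u : ℝ)| with hb
  have hab : a ≤ b := by
    rw [ha, hb, ← Int.cast_abs, ← Int.cast_abs]
    exact_mod_cast htu
  have h1 : 0 ≤ (t : ℝ) * x * Real.sinh ((t : ℝ) * θ)
      - (s : ℝ) * Real.sinh θ * Real.cosh ((t : ℝ) * θ) := by
    have := mul_nonneg h hsθ.le
    rwa [phi_sinh s θ hθ t] at this
  have h1' : (s : ℝ) * Real.sinh θ * Real.cosh (a * θ) ≤ a * x * Real.sinh (a * θ) := by
    have e1 : (t : ℝ) * x * Real.sinh ((t : ℝ) * θ) = a * x * Real.sinh (a * θ) := by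
      rw [ha]
      have := abs_mul_sinh (t : ℝ) θ
      nlinarith [this]
    have e2 : Real.cosh ((t : ℝ) * θ) = Real.cosh (a * θ) := cosh_abs _ _
    rw [e1, e2] at h1
    linarith
  have key := key_mono a b θ (abs_nonneg _) hab hθpos.le
  have hca := Real.cosh_pos (a * θ)
  have hcb := Real.cosh_pos (b * θ)
  have step1 : (s : ℝ) * Real.sinh θ * Real.cosh (a * θ) * Real.cosh (b * θ)
      ≤ a * x * Real.sinh (a * θ) * Real.cosh (b * θ) :=
    mul_le_mul_of_nonneg_right h1' hcb.le
  have step2 : a * Real.sinh (a * θ) * Real.cosh (b * θ) * x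
      ≤ b * Real.sinh (b * θ) * Real.cosh (a * θ) * x :=
    mul_le_mul_of_nonneg_right key hx0.le
  have step3 : (s : ℝ) * Real.sinh θ * Real.cosh (b * θ) ≤ b * x * Real.sinh (b * θ) := by
    nlinarith [hca]
  have h2 : 0 ≤ phi s x u * Real.sinh θ := by
    rw [phi_sinh s θ hθ u]
    have e1 : (u : ℝ) * x * Real.sinh ((u : ℝ) * θ) = b * x * Real.sinh (b * θ) := by
      rw [hb]
      have := abs_mul_sinh (u : ℝ) θ
      nlinarith [this]
    have e2 : Real.cosh ((u : ℝ) * θ) = Real.cosh (b * θ) := cosh_abs _ _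
    rw [e1, e2]
    linarith
  nlinarith [h2, hsθ]

lemma core (r s : ℕ) (hs2 : 2 ≤ s) (x : ℝ) (hx : 1 < x) :
    0 ≤ (Polynomial.derivative (G r s)).eval x ∧
      x * (Polynomial.derivative (G r s)).eval x ≤ (s : ℝ) * (G r s).eval x := by
  obtain ⟨θ, hθpos, hθ⟩ := exists_cosh hx
  have hx0 : (0:ℝ) < x := by linarith
  have hsθ : 0 < Real.sinh θ := by
    rw [← Real.sinh_zero]; exact Real.sinh_lt_sinh.2 hθpos
  have hd1 : Polynomial.derivative (G r s) = ((2 : ℝ) ^ s)⁻¹ • ∑ j ∈ Finset.range (s + 1),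
      (s.choose j : ℝ) • (if |2 * (j : ℤ) - s| ≤ (r : ℤ)
        then Polynomial.derivative (T ℝ (2 * (j:ℤ) - s)) else 0) := by
    unfold G Phi
    rw [Polynomial.derivative_smul, map_sum]
    congr 1
    refine Finset.sum_congr rfl fun j _ => ?_
    rw [Polynomial.derivative_smul]
    congr 1
    split <;> simp
  have hG : (G r s).eval x = ((2 : ℝ) ^ s)⁻¹ * ∑ j ∈ Finset.range (s + 1),
      (s.choose j : ℝ) * (if |2 * (j : ℤ) - s| ≤ (r : ℤ)
        then (T ℝ (2 * (j:ℤ) - s)).eval x else 0) := by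
    unfold G Phi
    simp only [eval_smul, eval_finset_sum, smul_eq_mul, apply_ite (Polynomial.eval x),
      Polynomial.eval_zero]
  have hG' : (Polynomial.derivative (G r s)).eval x = ((2 : ℝ) ^ s)⁻¹ *
      ∑ j ∈ Finset.range (s + 1), (s.choose j : ℝ) * (if |2 * (j : ℤ) - s| ≤ (r : ℤ)
        then (Polynomial.derivative (T ℝ (2 * (j:ℤ) - s))).eval x else 0) := by
    rw [hd1]
    simp only [eval_smul, eval_finset_sum, smul_eq_mul, apply_ite (Polynomial.eval x),
      Polynomial.eval_zero]
  constructor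
  · rw [hG']
    apply mul_nonneg (by positivity)
    apply Finset.sum_nonneg
    intro j _
    apply mul_nonneg (Nat.cast_nonneg _)
    split
    · have hd := T_deriv_eval_cosh (2 * (j:ℤ) - s) θ
      rw [hθ] at hd
      have hcs : 0 ≤ ((2 * (j:ℤ) - s : ℤ) : ℝ) * Real.sinh (((2 * (j:ℤ) - s : ℤ) : ℝ) * θ) := by
        rw [abs_mul_sinh]
        apply mul_nonneg (abs_nonneg _)
        rw [← Real.sinh_zero]
        exact Real.sinh_le_sinh.2 (mul_nonneg (abs_nonneg _) hθpos.le)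
      nlinarith [hd, hcs, hsθ]
    · exact le_refl 0
  · -- upper bound
    have hA : ∑ j ∈ Finset.range (s + 1), (s.choose j : ℝ) * (T ℝ (2 * (j:ℤ) - s)).eval x
        = 2 ^ s * x ^ s := by
      have := congrArg (Polynomial.eval x) (sum_T_eq s)
      simpa [eval_finset_sum, smul_eq_mul] using this
    have hB : ∑ j ∈ Finset.range (s + 1),
        (s.choose j : ℝ) * (Polynomial.derivative (T ℝ (2 * (j:ℤ) - s))).eval x
        = 2 ^ s * ((s : ℝ) * x ^ (s - 1)) := by
      have := congrArg (fun p => (Polynomial.derivative p).eval x) (sum_T_eq s)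
      simp only [map_sum, Polynomial.derivative_smul, Polynomial.derivative_X_pow,
        eval_finset_sum, eval_smul, smul_eq_mul, eval_mul, eval_natCast, eval_pow,
        eval_X, Polynomial.eval_C] at this
      rw [this]
    have hxpow : x * x ^ (s - 1) = x ^ s := by
      rw [← pow_succ']
      congr 1
      omega
    have hfull : ∑ j ∈ Finset.range (s + 1),
        (s.choose j : ℝ) * phi s x (2 * (j:ℤ) - s) = 0 := by
      have hsplit : ∑ j ∈ Finset.range (s + 1), (s.choose j : ℝ) * phi s x (2 * (j:ℤ) - s)
          = x * (∑ j ∈ Finset.range (s + 1),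
              (s.choose j : ℝ) * (Polynomial.derivative (T ℝ (2 * (j:ℤ) - s))).eval x)
            - (s : ℝ) * ∑ j ∈ Finset.range (s + 1),
              (s.choose j : ℝ) * (T ℝ (2 * (j:ℤ) - s)).eval x := by
        rw [Finset.mul_sum, Finset.mul_sum, ← Finset.sum_sub_distrib]
        refine Finset.sum_congr rfl fun j _ => ?_
        unfold phi
        ring
      rw [hsplit, hA, hB]
      linear_combination ((2:ℝ) ^ s * (s:ℝ)) * hxpow
    have hS : ∑ j ∈ Finset.range (s + 1), (s.choose j : ℝ) *
        (if |2 * (j : ℤ) - s| ≤ (r : ℤ) then phi s x (2 * (j:ℤ) - s) else 0) ≤ 0 := by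
      by_cases hcase : ∀ j ∈ Finset.range (s + 1),
          ¬ (|2 * (j : ℤ) - s| ≤ (r : ℤ)) → 0 ≤ phi s x (2 * (j:ℤ) - s)
      · have hsplit : ∑ j ∈ Finset.range (s + 1), (s.choose j : ℝ) *
            (if |2 * (j : ℤ) - s| ≤ (r : ℤ) then phi s x (2 * (j:ℤ) - s) else 0)
            = (∑ j ∈ Finset.range (s + 1), (s.choose j : ℝ) * phi s x (2 * (j:ℤ) - s))
              - ∑ j ∈ Finset.range (s + 1), (s.choose j : ℝ) *
                (if |2 * (j : ℤ) - s| ≤ (r : ℤ) then 0 else phi s x (2 * (j:ℤ) - s)) := by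
          rw [← Finset.sum_sub_distrib]
          refine Finset.sum_congr rfl fun j _ => ?_
          split <;> ring
        rw [hsplit, hfull, zero_sub, neg_nonpos]
        apply Finset.sum_nonneg
        intro j hj
        apply mul_nonneg (Nat.cast_nonneg _)
        split
        · exact le_refl 0
        · exact hcase j hj (by assumption)
      · push_neg at hcase
        obtain ⟨j0, hj0mem, hj0r, hj0neg⟩ := hcase
        apply Finset.sum_nonpos
        intro j hj
        rcases le_or_gt |2 * (j : ℤ) - s| (r : ℤ) with h | h
        · rw [if_pos h]
          have habs : |2 * (j : ℤ) - s| ≤ |2 * (j0 : ℤ) - s| :=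
            le_trans h (le_of_lt hj0r)
          have hneg : phi s x (2 * (j:ℤ) - s) ≤ 0 := by
            by_contra hcon
            push_neg at hcon
            exact absurd (phi_mono s θ hθpos hθ _ _ habs hcon.le) (not_le.mpr hj0neg)
          exact mul_nonpos_iff.2 (Or.inl ⟨Nat.cast_nonneg _, hneg⟩)
        · rw [if_neg (not_le.mpr h)]
          simp
    have hkey : x * (∑ j ∈ Finset.range (s + 1), (s.choose j : ℝ) *
          (if |2 * (j : ℤ) - s| ≤ (r : ℤ)
            then (Polynomial.derivative (T ℝ (2 * (j:ℤ) - s))).eval x else 0))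
        - (s : ℝ) * (∑ j ∈ Finset.range (s + 1), (s.choose j : ℝ) *
          (if |2 * (j : ℤ) - s| ≤ (r : ℤ) then (T ℝ (2 * (j:ℤ) - s)).eval x else 0))
        = ∑ j ∈ Finset.range (s + 1), (s.choose j : ℝ) *
          (if |2 * (j : ℤ) - s| ≤ (r : ℤ) then phi s x (2 * (j:ℤ) - s) else 0) := by
      rw [Finset.mul_sum, Finset.mul_sum, ← Finset.sum_sub_distrib]
      refine Finset.sum_congr rfl fun j _ => ?_
      unfold phi
      split <;> ring
    rw [hG, hG']
    have h1 : ((2 : ℝ) ^ s)⁻¹ * (∑ j ∈ Finset.range (s + 1), (s.choose j : ℝ) *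
          (if |2 * (j : ℤ) - s| ≤ (r : ℤ) then phi s x (2 * (j:ℤ) - s) else 0)) ≤ 0 :=
      mul_nonpos_iff.2 (Or.inl ⟨by positivity, hS⟩)
    rw [← hkey] at h1
    nlinarith [h1]

end GDerivAux

/-- For even s ≥ 2, 0 ≤ r ≤ s, and x ≥ 1: 0 ≤ G_{r,s}'(x) ≤ (s/x)·G_{r,s}(x). -/
theorem G_deriv_bound (r s : ℕ) (hs2 : 2 ≤ s) (hse : Even s) (hrs : r ≤ s)
    (x : ℝ) (hx : 1 ≤ x) :
    0 ≤ (Polynomial.derivative (G r s)).eval x ∧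
    (Polynomial.derivative (G r s)).eval x ≤ ((s : ℝ) / x) * (G r s).eval x := by
  rcases lt_or_eq_of_le hx with hlt | heq
  · obtain ⟨h1, h2⟩ := GDerivAux.core r s hs2 x hlt
    refine ⟨h1, ?_⟩
    rw [div_mul_eq_mul_div, le_div_iff₀ (by linarith : (0:ℝ) < x)]
    linarith
  · subst heq
    have hc1 : Continuous fun t : ℝ => (Polynomial.derivative (G r s)).eval t :=
      (Polynomial.derivative (G r s)).continuous
    have hc2 : Continuous fun t : ℝ =>
        (s : ℝ) * (G r s).eval t - t * (Polynomial.derivative (G r s)).eval t :=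
      (continuous_const.mul (G r s).continuous).sub (continuous_id.mul hc1)
    have ht1 : Filter.Tendsto (fun t : ℝ => (Polynomial.derivative (G r s)).eval t)
        (nhdsWithin 1 (Set.Ioi 1)) (nhds ((Polynomial.derivative (G r s)).eval 1)) :=
      (hc1.tendsto 1).mono_left nhdsWithin_le_nhds
    have ht2 : Filter.Tendsto (fun t : ℝ =>
        (s : ℝ) * (G r s).eval t - t * (Polynomial.derivative (G r s)).eval t)
        (nhdsWithin 1 (Set.Ioi 1))
        (nhds ((s : ℝ) * (G r s).eval 1 - 1 * (Polynomial.derivative (G r s)).eval 1)) :=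
      (hc2.tendsto 1).mono_left nhdsWithin_le_nhds
    have h1 : 0 ≤ (Polynomial.derivative (G r s)).eval 1 := by
      refine ge_of_tendsto ht1 ?_
      refine eventually_nhdsWithin_of_forall fun t ht => ?_
      exact (GDerivAux.core r s hs2 t (Set.mem_Ioi.mp ht)).1
    have h2 : 0 ≤ (s : ℝ) * (G r s).eval 1 - 1 * (Polynomial.derivative (G r s)).eval 1 := by
      refine ge_of_tendsto ht2 ?_
      refine eventually_nhdsWithin_of_forall fun t ht => ?_
      have := (GDerivAux.core r s hs2 t (Set.mem_Ioi.mp ht)).2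
      linarith
    refine ⟨h1, ?_⟩
    rw [div_one]
    linarith
end

section
/- There exists δ₀ > 0 such that for all real β ≥ 1 and all 0 < δ < δ₀, with the parameter settings ℓ = 2⌈log(β/δ)⌉, s = 2⌈10⁷·β²·log(β/δ)⌉, r = 2⌈10⁴·β·log(β/δ)⌉, the polynomial Q(x) := G_{r,s}(E_ℓ(x/s)) satisfies |Q(x) − e^{−x}| ≤ δ/50 for all real x with 0 ≤ x ≤ s. -/
/-- The exponential truncation polynomial E_ℓ(x) := ∑_{j=0}^{ℓ} (−1)^j x^j / j!. -/
noncomputable def E (ℓ : ℕ) (x : ℝ) : ℝ :=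
  ∑ j ∈ Finset.range (ℓ + 1), (-1) ^ j * x ^ j / (Nat.factorial j)

open Finset

set_option maxHeartbeats 1000000

lemma phi_abs_le (t : ℤ) {y : ℝ} (hy : |y| ≤ 1) : |(Phi t).eval y| ≤ 1 := by
  rw [abs_le] at hy
  rw [Phi, ← Real.cos_arccos hy.1 hy.2, Polynomial.Chebyshev.T_real_cos]
  exact Real.abs_cos_le_one _

lemma sum_exp_eq (s : ℕ) (θ : ℝ) :
    ∑ j ∈ range (s+1), (s.choose j : ℂ) * Complex.exp ((2*(j:ℂ) - s) * θ * Complex.I)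
      = (2 * Complex.cos θ) ^ s := by
  have h2c : (2 : ℂ) * Complex.cos θ
      = Complex.exp ((θ:ℂ) * Complex.I) + Complex.exp (-(θ:ℂ) * Complex.I) := by
    rw [Complex.cos]; ring
  rw [h2c, add_pow]
  refine Finset.sum_congr rfl fun j hj => ?_
  have hj' : j ≤ s := Nat.lt_succ_iff.mp (Finset.mem_range.mp hj)
  rw [← Complex.exp_nat_mul, ← Complex.exp_nat_mul, ← Complex.exp_add, mul_comm]
  congr 2
  push_cast [hj']
  ring

lemma sum_choose_T (s : ℕ) {y : ℝ} (hy : |y| ≤ 1) :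
    ∑ j ∈ range (s+1), (s.choose j : ℝ) * (Phi (2*(j:ℤ) - s)).eval y = 2^s * y^s := by
  rw [abs_le] at hy
  set θ := Real.arccos y with hθ
  have hyθ : y = Real.cos θ := (Real.cos_arccos hy.1 hy.2).symm
  have hmain := congrArg Complex.re (sum_exp_eq s θ)
  rw [Complex.re_sum] at hmain
  have hL : ∀ j ∈ range (s+1),
      ((s.choose j : ℂ) * Complex.exp ((2*(j:ℂ) - s) * θ * Complex.I)).re
        = (s.choose j : ℝ) * (Phi (2*(j:ℤ) - s)).eval y := by
    intro j hj
    have harg : (2*(j:ℂ) - s) * θ * Complex.I = (((2*(j:ℝ) - s) * θ : ℝ) : ℂ) * Complex.I := by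
      push_cast; ring
    rw [harg, ← Complex.ofReal_natCast, Complex.re_ofReal_mul, Complex.exp_ofReal_mul_I_re]
    rw [hyθ, Phi, Polynomial.Chebyshev.T_real_cos]
    congr 1
    push_cast; ring
  rw [Finset.sum_congr rfl hL] at hmain
  rw [hmain]
  rw [show (2 * Complex.cos (θ:ℂ)) = (((2 * Real.cos θ : ℝ)) : ℂ) by
    rw [Complex.ofReal_mul, Complex.ofReal_cos]; norm_num]
  rw [← Complex.ofReal_pow, Complex.ofReal_re, mul_pow, hyθ]

lemma mgf_eq (s : ℕ) (lam : ℝ) :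
    ∑ j ∈ range (s+1), (s.choose j : ℝ) * Real.exp (lam * (2*(j:ℝ) - s))
      = (Real.exp lam + Real.exp (-lam))^s := by
  rw [add_pow]
  refine Finset.sum_congr rfl fun j hj => ?_
  have hj' : j ≤ s := Nat.lt_succ_iff.mp (Finset.mem_range.mp hj)
  rw [← Real.exp_nat_mul, ← Real.exp_nat_mul, ← Real.exp_add, mul_comm]
  congr 2
  push_cast [hj']
  ring

lemma tail_le {s r : ℕ} (hs : 0 < s) :
    ∑ j ∈ range (s+1), (if |2*(j:ℤ) - s| ≤ (r:ℤ) then 0 else (s.choose j : ℝ))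
      ≤ 2^s * (2 * Real.exp (-(r:ℝ)^2 / (2*s))) := by
  set lam : ℝ := r / s with hlam
  have hs' : (0:ℝ) < s := by exact_mod_cast hs
  have hlam0 : 0 ≤ lam := by positivity
  have hterm : ∀ j ∈ range (s+1),
      (if |2*(j:ℤ) - s| ≤ (r:ℤ) then 0 else (s.choose j : ℝ))
        ≤ (s.choose j : ℝ) * (Real.exp (lam * (2*(j:ℝ) - s) - lam*r)
            + Real.exp (lam * ((s:ℝ) - 2*j) - lam*r)) := by
    intro j hj
    split_ifs with h
    · positivity
    · push_neg at h
      have hC : (1:ℝ) ≤ (s.choose j : ℝ) := by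
        have := Nat.choose_pos (Nat.lt_succ_iff.mp (Finset.mem_range.mp hj))
        exact_mod_cast this
      have hone : (1:ℝ) ≤ Real.exp (lam * (2*(j:ℝ) - s) - lam*r)
            + Real.exp (lam * ((s:ℝ) - 2*j) - lam*r) := by
        rcases lt_abs.mp h with h1 | h1
        · have h1' : (r:ℝ) ≤ 2*(j:ℝ) - s := by exact_mod_cast h1.le
          have : (0:ℝ) ≤ lam * (2*(j:ℝ) - s) - lam*r := by nlinarith
          nlinarith [Real.one_le_exp this, Real.exp_pos (lam * ((s:ℝ) - 2*j) - lam*r)]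
        · have h1' : (r:ℝ) ≤ (s:ℝ) - 2*j := by
            have : (r:ℤ) < s - 2*j := by omega
            exact_mod_cast this.le
          have : (0:ℝ) ≤ lam * ((s:ℝ) - 2*j) - lam*r := by nlinarith
          nlinarith [Real.one_le_exp this, Real.exp_pos (lam * (2*(j:ℝ) - s) - lam*r)]
      nlinarith
  calc ∑ j ∈ range (s+1), (if |2*(j:ℤ) - s| ≤ (r:ℤ) then 0 else (s.choose j : ℝ))
      ≤ ∑ j ∈ range (s+1), (s.choose j : ℝ) * (Real.exp (lam * (2*(j:ℝ) - s) - lam*r)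
            + Real.exp (lam * ((s:ℝ) - 2*j) - lam*r)) := Finset.sum_le_sum hterm
    _ = Real.exp (-(lam*r)) * ((Real.exp lam + Real.exp (-lam))^s
          + (Real.exp (-lam) + Real.exp lam)^s) := by
        have m2 : (Real.exp (-lam) + Real.exp lam)^s
            = ∑ j ∈ range (s+1), (s.choose j : ℝ) * Real.exp ((-lam) * (2*(j:ℝ) - s)) := by
          have := mgf_eq s (-lam); rw [this, neg_neg]
        rw [← mgf_eq s lam, m2]
        rw [mul_add, Finset.mul_sum, Finset.mul_sum, ← Finset.sum_add_distrib]
        refine Finset.sum_congr rfl fun j hj => ?_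
        rw [show lam * (2*(j:ℝ) - s) - lam*r = (-(lam*r)) + lam * (2*(j:ℝ) - s) by ring,
            show lam * ((s:ℝ) - 2*j) - lam*r = (-(lam*r)) + (-lam) * (2*(j:ℝ) - s) by ring,
            Real.exp_add, Real.exp_add]
        ring
    _ ≤ Real.exp (-(lam*r)) * (2 * (2 * Real.exp (lam^2/2))^s) := by
        have hcosh : Real.exp lam + Real.exp (-lam) ≤ 2 * Real.exp (lam^2/2) := by
          have := Real.cosh_le_exp_half_sq lam
          rw [Real.cosh_eq] at this
          linarith
        have hpow : (Real.exp lam + Real.exp (-lam))^s ≤ (2 * Real.exp (lam^2/2))^s := by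
          apply pow_le_pow_left₀ (by positivity) hcosh
        have hpow' : (Real.exp (-lam) + Real.exp lam)^s ≤ (2 * Real.exp (lam^2/2))^s := by
          rw [add_comm]; exact hpow
        have := Real.exp_pos (-(lam*r))
        nlinarith
    _ = 2^s * (2 * Real.exp (-(r:ℝ)^2 / (2*s))) := by
        rw [mul_pow, ← Real.exp_nat_mul]
        rw [show Real.exp (-(lam*(r:ℝ))) * (2*((2:ℝ)^s * Real.exp ((s:ℝ)*(lam^2/2))))
            = 2^s * (2 * (Real.exp (-(lam*(r:ℝ))) * Real.exp ((s:ℝ)*(lam^2/2)))) by ring,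
          ← Real.exp_add]
        rw [show -(lam*(r:ℝ)) + (s:ℝ)*(lam^2/2) = -(r:ℝ)^2/(2*(s:ℝ)) by
          rw [hlam]; field_simp; ring]

lemma G_eval_sub {r s : ℕ} (hs : 0 < s) {y : ℝ} (hy : |y| ≤ 1) :
    |(G r s).eval y - y ^ s| ≤ 2 * Real.exp (-(r:ℝ)^2 / (2*s)) := by
  have h2s : (0:ℝ) < 2^s := by positivity
  have hGe : (G r s).eval y = ((2:ℝ)^s)⁻¹ * ∑ j ∈ range (s+1),
      (s.choose j : ℝ) * (if |2*(j:ℤ) - s| ≤ (r:ℤ) then (Phi (2*(j:ℤ) - s)).eval y else 0) := by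
    rw [G, Polynomial.eval_smul, smul_eq_mul]
    congr 1
    rw [Polynomial.eval_finset_sum]
    refine Finset.sum_congr rfl fun j hj => ?_
    rw [Polynomial.eval_smul, smul_eq_mul, apply_ite (Polynomial.eval y), Polynomial.eval_zero]
  have hys : y ^ s = ((2:ℝ)^s)⁻¹ * ∑ j ∈ range (s+1),
      (s.choose j : ℝ) * (Phi (2*(j:ℤ) - s)).eval y := by
    rw [sum_choose_T s hy, inv_mul_eq_div, mul_comm, mul_div_assoc, div_self (ne_of_gt h2s), mul_one]
  rw [hGe, hys, ← mul_sub, ← Finset.sum_sub_distrib, abs_mul]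
  have habs : |((2:ℝ)^s)⁻¹| = ((2:ℝ)^s)⁻¹ := abs_of_pos (by positivity)
  rw [habs]
  have hbound : |∑ j ∈ range (s+1),
      ((s.choose j : ℝ) * (if |2*(j:ℤ) - s| ≤ (r:ℤ) then (Phi (2*(j:ℤ) - s)).eval y else 0)
        - (s.choose j : ℝ) * (Phi (2*(j:ℤ) - s)).eval y)|
      ≤ 2^s * (2 * Real.exp (-(r:ℝ)^2 / (2*s))) := by
    refine le_trans (Finset.abs_sum_le_sum_abs _ _) (le_trans (Finset.sum_le_sum ?_) (tail_le hs))
    intro j hj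
    split_ifs with h
    · simp
    · rw [← mul_sub, zero_sub, abs_mul, abs_neg]
      have h1 : |(s.choose j : ℝ)| = (s.choose j : ℝ) := abs_of_nonneg (by positivity)
      rw [h1]
      calc (s.choose j : ℝ) * |(Phi (2*(j:ℤ) - s)).eval y| ≤ (s.choose j : ℝ) * 1 :=
            mul_le_mul_of_nonneg_left (phi_abs_le _ hy) (by positivity)
        _ = (s.choose j : ℝ) := mul_one _
  calc ((2:ℝ)^s)⁻¹ * |∑ j ∈ range (s+1), _| ≤ ((2:ℝ)^s)⁻¹ * (2^s * (2 * Real.exp (-(r:ℝ)^2 / (2*s)))) :=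
        mul_le_mul_of_nonneg_left hbound (by positivity)
    _ = 2 * Real.exp (-(r:ℝ)^2 / (2*s)) := by field_simp

lemma E_approx {ℓ : ℕ} (hl : 2 ≤ ℓ) {u : ℝ} (h0 : 0 ≤ u) (h1 : u ≤ 1) :
    |E ℓ u - Real.exp (-u)| ≤ u^3 / 3 ∧ |E ℓ u - Real.exp (-u)| ≤ 2 / (Nat.factorial (ℓ+1)) := by
  have hE : E ℓ u = ∑ j ∈ range (ℓ+1), (-u)^j / (Nat.factorial j) := by
    refine Finset.sum_congr rfl fun j _ => ?_
    rw [neg_pow]; ring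
  have habs : |(-u)| ≤ 1 := by rw [abs_neg, abs_of_nonneg h0]; exact h1
  have hb := Real.exp_bound habs (n := ℓ+1) (Nat.succ_pos ℓ)
  rw [← hE] at hb
  rw [abs_neg, abs_of_nonneg h0] at hb
  have hb' : |E ℓ u - Real.exp (-u)| ≤ u ^ (ℓ+1) * ((ℓ+2) / ((Nat.factorial (ℓ+1)) * (ℓ+1))) := by
    rw [abs_sub_comm]
    convert hb using 3 <;> push_cast <;> ring
  have hfact : (0:ℝ) < (Nat.factorial (ℓ+1)) := by positivity
  constructor
  · refine le_trans hb' ?_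
    have hup : u ^ (ℓ+1) ≤ u ^ 3 := pow_le_pow_of_le_one h0 h1 (by omega)
    have hq : ((ℓ:ℝ)+2) / ((Nat.factorial (ℓ+1)) * (ℓ+1)) ≤ 1/3 := by
      rw [div_le_div_iff₀ (by positivity) (by norm_num)]
      have h6 : (6:ℝ) ≤ (Nat.factorial (ℓ+1)) := by
        have : Nat.factorial 3 ≤ Nat.factorial (ℓ+1) := Nat.factorial_le (by omega)
        exact_mod_cast le_trans (by decide : (6:ℕ) ≤ Nat.factorial 3) this
      have h3 : (3:ℝ) ≤ (ℓ:ℝ)+1 := by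
        have : (2:ℝ) ≤ ℓ := by exact_mod_cast hl
        linarith
      nlinarith
    calc u ^ (ℓ+1) * ((ℓ+2) / ((Nat.factorial (ℓ+1)) * (ℓ+1))) ≤ u^3 * (1/3) := by
          apply mul_le_mul hup hq (by positivity) (by positivity)
      _ = u^3/3 := by ring
  · refine le_trans hb' ?_
    have hup : u ^ (ℓ+1) ≤ 1 := pow_le_one₀ h0 h1
    have hq : ((ℓ:ℝ)+2) / ((Nat.factorial (ℓ+1)) * (ℓ+1)) ≤ 2 / (Nat.factorial (ℓ+1)) := by
      rw [div_le_div_iff₀ (by positivity) (by positivity)]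
      have h3 : (2:ℝ) ≤ ℓ := by exact_mod_cast hl
      nlinarith
    calc u ^ (ℓ+1) * ((ℓ+2) / ((Nat.factorial (ℓ+1)) * (ℓ+1)))
        ≤ 1 * (2 / (Nat.factorial (ℓ+1))) := by
          apply mul_le_mul hup hq (by positivity) (by norm_num)
      _ = 2 / (Nat.factorial (ℓ+1)) := one_mul _

lemma E_abs_le {ℓ : ℕ} (hl : 2 ≤ ℓ) {u : ℝ} (h0 : 0 ≤ u) (h1 : u ≤ 1) : |E ℓ u| ≤ 1 := by
  have h := (E_approx hl h0 h1).1
  rw [abs_le] at h ⊢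
  have h1u : (0:ℝ) < 1 + u := by linarith
  have hexp : Real.exp (-u) ≤ 1/(1+u) := by
    have h2 : (1:ℝ)+u ≤ Real.exp u := by linarith [Real.add_one_le_exp u]
    have h3 := one_div_le_one_div_of_le h1u h2
    rw [Real.exp_neg, inv_eq_one_div]
    exact h3
  have hexp0 : 0 < Real.exp (-u) := Real.exp_pos _
  have hexp1 : Real.exp (-u) ≤ 1 := Real.exp_le_one_iff.mpr (by linarith)
  have hu3 : u^3 ≤ 1 := pow_le_one₀ h0 h1
  have hkey : Real.exp (-u) * (1+u) ≤ 1 := by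
    calc Real.exp (-u) * (1+u) ≤ (1/(1+u)) * (1+u) := by nlinarith
      _ = 1 := by field_simp
  constructor
  · linarith
  · nlinarith [sq_nonneg u, sq_nonneg (1-u), mul_nonneg h0 (mul_nonneg h0 h0)]

lemma abs_pow_sub_pow_le' {a b : ℝ} (ha : |a| ≤ 1) (hb : |b| ≤ 1) (s : ℕ) :
    |a^s - b^s| ≤ s * |a - b| := by
  induction s with
  | zero => simp
  | succ n ih =>
    have key : a^(n+1) - b^(n+1) = a*(a^n - b^n) + (a-b)*b^n := by ring
    rw [key]
    have hstep : |a * (a^n - b^n) + (a - b) * b^n| ≤ |a| * |a^n - b^n| + |a - b| * |b|^n := by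
      refine le_trans (abs_add_le _ _) ?_
      rw [abs_mul, abs_mul, abs_pow]
    have h1 : |a| * |a^n - b^n| ≤ 1 * ((n:ℝ) * |a - b|) :=
      mul_le_mul ha ih (abs_nonneg _) zero_le_one
    have h2 : |a - b| * |b|^n ≤ |a - b| * 1 :=
      mul_le_mul_of_nonneg_left (pow_le_one₀ (abs_nonneg _) hb) (abs_nonneg _)
    have hcast : ((n+1:ℕ):ℝ) = (n:ℝ) + 1 := by push_cast; ring
    rw [hcast]
    linarith

lemma pow_le_exp_mul_factorial {x : ℝ} (hx : 0 ≤ x) (k : ℕ) :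
    x ^ k ≤ Real.exp x * (Nat.factorial k) := by
  have h := Real.sum_le_exp_of_nonneg hx (k+1)
  have hsingle : x^k / (Nat.factorial k) ≤ ∑ i ∈ range (k+1), x^i / (Nat.factorial i) := by
    apply Finset.single_le_sum (f := fun i => x^i / (Nat.factorial i))
    · intro i _; positivity
    · exact Finset.self_mem_range_succ k
  have hf : (0:ℝ) < (Nat.factorial k) := by positivity
  have := le_trans hsingle h
  rw [div_le_iff₀ hf] at this
  linarith

/-- There exists δ₀ > 0 such that for all β ≥ 1 and 0 < δ < δ₀, with
ℓ = 2⌈log(β/δ)⌉, s = 2⌈10⁷·β²·log(β/δ)⌉, r = 2⌈10⁴·β·log(β/δ)⌉,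
Q(x) := G_{r,s}(E_ℓ(x/s)) satisfies |Q(x) − e^{−x}| ≤ δ/50 for 0 ≤ x ≤ s. -/
theorem Q_accuracy :
    ∃ δ₀ : ℝ, 0 < δ₀ ∧
      ∀ β δ : ℝ, 1 ≤ β → 0 < δ → δ < δ₀ →
        ∀ ℓ s r : ℕ,
          ℓ = 2 * ⌈Real.log (β / δ)⌉₊ →
          s = 2 * ⌈10 ^ 7 * β ^ 2 * Real.log (β / δ)⌉₊ →
          r = 2 * ⌈10 ^ 4 * β * Real.log (β / δ)⌉₊ →
          ∀ x : ℝ, 0 ≤ x → x ≤ s →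
            |(G r s).eval (E ℓ (x / s)) - Real.exp (-x)| ≤ δ / 50 := by
  refine ⟨Real.exp (-100), Real.exp_pos _, ?_⟩
  intro β δ hβ hδ hδ0 ℓ s r hℓ hs hr x hx0 hxs
  set L := Real.log (β / δ) with hLdef
  have hbd0 : (0:ℝ) < β / δ := by positivity
  have h100 : (100:ℝ) ≤ L := by
    rw [hLdef, Real.le_log_iff_exp_le hbd0, le_div_iff₀ hδ]
    have h1 : Real.exp 100 * δ ≤ Real.exp 100 * Real.exp (-100) :=
      mul_le_mul_of_nonneg_left hδ0.le (Real.exp_pos _).le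
    rw [← Real.exp_add] at h1
    norm_num at h1
    linarith
  have hL0 : (0:ℝ) < L := by linarith
  have hexpL : Real.exp L = β / δ := Real.exp_log hbd0
  have ht : (101:ℝ) ≤ 1/δ := by
    rw [le_div_iff₀ hδ]
    have h1 : (101:ℝ) * δ ≤ 101 * Real.exp (-100) := by nlinarith
    have h2 : (101:ℝ) * Real.exp (-100) ≤ 1 := by
      have h3 : (101:ℝ) ≤ Real.exp 100 := by nlinarith [Real.add_one_le_exp (100:ℝ)]
      have h4 := Real.exp_pos (-100 : ℝ)
      have h5 : Real.exp (-100:ℝ) * Real.exp (100:ℝ) = 1 := by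
        rw [← Real.exp_add]; norm_num
      nlinarith
    linarith
  -- parameter bounds
  have hA1 : (1:ℝ) ≤ 10^7 * β^2 * L := by nlinarith
  have hs_lb : 2 * (10^7 * β^2 * L) ≤ (s:ℝ) := by
    rw [hs]; push_cast
    nlinarith [Nat.le_ceil (10^7 * β^2 * L)]
  have hs_ub : (s:ℝ) ≤ 4 * (10^7 * β^2 * L) := by
    rw [hs]; push_cast
    have h1 := (Nat.ceil_lt_add_one (by linarith : (0:ℝ) ≤ 10^7 * β^2 * L)).le
    nlinarith
  have hs0 : 0 < s := by
    rw [hs]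
    have : 0 < ⌈10^7 * β^2 * L⌉₊ := Nat.one_le_ceil_iff.mpr (by linarith)
    omega
  have hsR0 : (0:ℝ) < (s:ℝ) := by exact_mod_cast hs0
  have hr_lb : 2 * (10^4 * β * L) ≤ (r:ℝ) := by
    rw [hr]; push_cast
    nlinarith [Nat.le_ceil (10^4 * β * L)]
  have hℓ_lb : 2 * L ≤ (ℓ:ℝ) := by
    rw [hℓ]; push_cast
    nlinarith [Nat.le_ceil L]
  have hℓ2 : 2 ≤ ℓ := by
    rw [hℓ]
    have : 0 < ⌈L⌉₊ := Nat.one_le_ceil_iff.mpr hL0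
    omega
  -- the argument u
  set u := x / (s:ℝ) with hu
  have h0u : 0 ≤ u := by positivity
  have h1u : u ≤ 1 := by rw [hu, div_le_one hsR0]; exact hxs
  set y := E ℓ u with hy'
  have hy : |y| ≤ 1 := E_abs_le hℓ2 h0u h1u
  have hexpabs : |Real.exp (-u)| ≤ 1 := by
    rw [abs_of_pos (Real.exp_pos _)]
    exact Real.exp_le_one_iff.mpr (by linarith)
  -- error 1
  have hstepa : 5*L ≤ (r:ℝ)^2/(2*(s:ℝ)) := by
    rw [le_div_iff₀ (by positivity)]
    have hrr : (2*(10^4*β*L))^2 ≤ (r:ℝ)^2 :=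
      pow_le_pow_left₀ (by positivity) hr_lb 2
    have hh1 : (2*(10^4*β*L))^2 = 4*10^8*(β*L)^2 := by ring
    have hh2 : 5*L*(s:ℝ) ≤ 5*L*(4*(10^7*β^2*L)) :=
      mul_le_mul_of_nonneg_left hs_ub (by positivity)
    have hh3 : 5*L*(4*(10^7*β^2*L)) = 2*10^8*(β*L)^2 := by ring
    rw [hh1] at hrr
    rw [hh3] at hh2
    linarith
  have hc1 : (200:ℝ) ≤ δ * Real.exp (5*L) := by
    have e5 : Real.exp (5*L) = (β/δ)^5 := by
      rw [show (5:ℝ)*L = ((5:ℕ):ℝ)*L by norm_num, Real.exp_nat_mul, hexpL]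
    rw [e5]
    have h15 : (1/δ)^5 ≤ (β/δ)^5 := by
      apply pow_le_pow_left₀ (by positivity)
      gcongr
    have hδ4 : δ * (1/δ)^5 = (1/δ)^4 := by field_simp
    have h4 : (101:ℝ)^4 ≤ (1/δ)^4 := pow_le_pow_left₀ (by norm_num) ht 4
    have step1 : δ * (1/δ)^5 ≤ δ * (β/δ)^5 := mul_le_mul_of_nonneg_left h15 hδ.le
    have h200 : (200:ℝ) ≤ 101^4 := by norm_num
    linarith
  have herr1 : 2 * Real.exp (-(r:ℝ)^2 / (2*(s:ℝ))) ≤ δ/100 := by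
    have hm : Real.exp (-(r:ℝ)^2 / (2*(s:ℝ))) ≤ Real.exp (-(5*L)) := by
      apply Real.exp_le_exp.mpr
      rw [neg_div]
      linarith
    have hp := Real.exp_pos (5*L)
    have h2 : 2 * Real.exp (-(5*L)) ≤ δ/100 := by
      rw [Real.exp_neg, inv_eq_one_div, mul_one_div,
        div_le_div_iff₀ hp (by norm_num : (0:ℝ) < 100)]
      linarith
    linarith [mul_le_mul_of_nonneg_left hm (by norm_num : (0:ℝ) ≤ 2)]
  have e1 : |(G r s).eval y - y ^ s| ≤ δ/100 := le_trans (G_eval_sub hs0 hy) herr1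
  -- error 2
  have hexps : Real.exp (-u)^s = Real.exp (-x) := by
    rw [← Real.exp_nat_mul]
    congr 1
    rw [hu]
    field_simp
  have hfact : (0:ℝ) < (Nat.factorial (ℓ+1) : ℝ) := by positivity
  have habs2 : |y^s - Real.exp (-x)| ≤ (s:ℝ) * (2/(Nat.factorial (ℓ+1))) := by
    rw [← hexps]
    refine le_trans (abs_pow_sub_pow_le' hy hexpabs s) ?_
    exact mul_le_mul_of_nonneg_left (E_approx hℓ2 h0u h1u).2 (by positivity)
  -- factorial lower bound
  have hfge : Real.exp (8*L) ≤ (Nat.factorial (ℓ+1) : ℝ) := by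
    have hx2L : (0:ℝ) ≤ 2*L := by linarith
    have hp1 := pow_le_exp_mul_factorial hx2L (ℓ+1)
    have hexp5 : Real.exp 5 ≤ 2*L := by
      have h5 : Real.exp 5 = Real.exp 1 ^ 5 := by
        rw [show (5:ℝ) = ((5:ℕ):ℝ)*1 by norm_num, Real.exp_nat_mul]
      have hlt := Real.exp_one_lt_d9
      have h2 : Real.exp 1 ^ 5 ≤ (2.7182818286:ℝ)^5 :=
        pow_le_pow_left₀ (Real.exp_pos 1).le hlt.le 5
      have h3 : (2.7182818286:ℝ)^5 ≤ 200 := by norm_num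
      rw [h5]; linarith
    have hpow5 : Real.exp 5 ^ (ℓ+1) ≤ (2*L) ^ (ℓ+1) :=
      pow_le_pow_left₀ (Real.exp_pos 5).le hexp5 (ℓ+1)
    have hexppow : Real.exp 5 ^ (ℓ+1) = Real.exp (((ℓ:ℝ)+1)*5) := by
      rw [show ((ℓ:ℝ)+1)*5 = (((ℓ+1:ℕ)):ℝ)*5 by push_cast; ring, Real.exp_nat_mul]
    have h10 : Real.exp (10*L) ≤ Real.exp (((ℓ:ℝ)+1)*5) := by
      apply Real.exp_le_exp.mpr
      linarith
    have hkey : Real.exp (10*L) ≤ Real.exp (2*L) * (Nat.factorial (ℓ+1) : ℝ) := by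
      calc Real.exp (10*L) ≤ Real.exp (((ℓ:ℝ)+1)*5) := h10
        _ = Real.exp 5 ^ (ℓ+1) := hexppow.symm
        _ ≤ (2*L) ^ (ℓ+1) := hpow5
        _ ≤ Real.exp (2*L) * (Nat.factorial (ℓ+1) : ℝ) := hp1
    have he2L := Real.exp_pos (2*L)
    rw [show (10:ℝ)*L = 2*L + 8*L by ring, Real.exp_add] at hkey
    calc Real.exp (8*L) = (Real.exp (2*L) * Real.exp (8*L)) / Real.exp (2*L) := by
          field_simp
      _ ≤ (Real.exp (2*L) * (Nat.factorial (ℓ+1) : ℝ)) / Real.exp (2*L) := by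
          gcongr
      _ = (Nat.factorial (ℓ+1) : ℝ) := by field_simp
  have hc2 : 200*(s:ℝ) ≤ δ * Real.exp (8*L) := by
    set t := 1/δ with htdef
    have htpos : (0:ℝ) < t := by positivity
    have hexpLt : Real.exp L = β * t := by
      rw [hexpL, htdef, div_eq_mul_one_div]
    have hβt : L ≤ β * t := by
      have h1 := Real.add_one_le_exp L
      rw [hexpLt] at h1
      linarith
    have h86 : (8:ℝ)*10^9 ≤ t^6 := by
      have h1 := pow_le_pow_left₀ (by norm_num : (0:ℝ) ≤ 101) ht 6
      norm_num at h1 ⊢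
      linarith
    have hβ38 : β^3 ≤ β^8 := pow_le_pow_right₀ hβ (by norm_num)
    have hkey : δ * Real.exp (8*L) = β^8 * t^7 := by
      have e8 : Real.exp (8*L) = (β*t)^8 := by
        rw [show (8:ℝ)*L = ((8:ℕ):ℝ)*L by norm_num, Real.exp_nat_mul, hexpLt]
      rw [e8, htdef]
      field_simp
    rw [hkey]
    calc 200*(s:ℝ) ≤ 200*(4*(10^7*β^2*L)) := by linarith
      _ = 8*10^9*(β^2*L) := by ring
      _ ≤ 8*10^9*(β^2*(β*t)) := by
          have h2 : β^2*L ≤ β^2*(β*t) := mul_le_mul_of_nonneg_left hβt (by positivity)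
          linarith
      _ = 8*10^9*(β^3*t) := by ring
      _ ≤ t^6*(β^3*t) := mul_le_mul_of_nonneg_right h86 (by positivity)
      _ = β^3*t^7 := by ring
      _ ≤ β^8*t^7 := mul_le_mul_of_nonneg_right hβ38 (by positivity)
  have herr2 : (s:ℝ) * (2/(Nat.factorial (ℓ+1):ℝ)) ≤ δ/100 := by
    rw [show (s:ℝ)*(2/(Nat.factorial (ℓ+1):ℝ)) = (2*(s:ℝ))/(Nat.factorial (ℓ+1):ℝ) by ring,
      div_le_div_iff₀ hfact (by norm_num : (0:ℝ) < 100)]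
    have h3 : δ * Real.exp (8*L) ≤ δ * (Nat.factorial (ℓ+1):ℝ) :=
      mul_le_mul_of_nonneg_left hfge hδ.le
    linarith
  have e2 : |y^s - Real.exp (-x)| ≤ δ/100 := le_trans habs2 herr2
  calc |(G r s).eval y - Real.exp (-x)|
      ≤ |(G r s).eval y - y^s| + |y^s - Real.exp (-x)| := abs_sub_le _ _ _
    _ ≤ δ/100 + δ/100 := add_le_add e1 e2
    _ = δ/50 := by ring
end

section
/- Let s ≥ 1, ℓ ≥ 0, and 0 ≤ r ≤ s be natural numbers. Then for every natural number j ≥ 0, the coefficient of x^j in the polynomial Q(x) := G_{r,s}(E_ℓ(x/s)) is at most 5^r·(r/s)^j / j! in absolute value. -/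
/-- The exponential truncation polynomial E_ℓ := ∑_{j=0}^{ℓ} (−1)^j X^j / j!. -/
noncomputable def Epoly (ℓ : ℕ) : Polynomial ℝ :=
  ∑ j ∈ Finset.range (ℓ + 1), Polynomial.C ((-1 : ℝ) ^ j / (Nat.factorial j : ℝ)) * Polynomial.X ^ j

/-- The polynomial Q(x) := G_{r,s}(E_ℓ(x/s)). -/
noncomputable def Q (r s ℓ : ℕ) : Polynomial ℝ :=
  (G r s).comp ((Epoly ℓ).comp (Polynomial.C ((s : ℝ))⁻¹ * Polynomial.X))



open Polynomial Finset

lemma coeff_comp_C_mul_X (p : ℝ[X]) (c : ℝ) (i : ℕ) :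
    (p.comp (C c * X)).coeff i = p.coeff i * c ^ i := by
  induction p using Polynomial.induction_on' with
  | add p q hp hq => simp [add_comp, hp, hq, add_mul]
  | monomial n a =>
    rw [monomial_comp, mul_pow, ← C_pow, ← mul_assoc, ← C_mul, C_mul_X_pow_eq_monomial,
      coeff_monomial, coeff_monomial]
    split_ifs with h
    · subst h; ring
    · simp

lemma Epoly_coeff_abs (ℓ i : ℕ) : |(Epoly ℓ).coeff i| ≤ 1 / (Nat.factorial i : ℝ) := by
  unfold Epoly
  rw [finset_sum_coeff]
  simp only [coeff_C_mul, coeff_X_pow, mul_ite, mul_one, mul_zero]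
  rw [Finset.sum_ite_eq (Finset.range (ℓ+1)) i]
  split_ifs with h
  · rw [abs_div, abs_pow, abs_neg, abs_one, one_pow, Nat.abs_cast]
  · simp only [abs_zero]
    positivity

lemma A_coeff_abs (s ℓ : ℕ) (hs : 1 ≤ s) (i : ℕ) :
    |((Epoly ℓ).comp (C ((s:ℝ))⁻¹ * X)).coeff i|
      ≤ 1 / ((Nat.factorial i : ℝ) * s ^ i) := by
  have hs0 : (0:ℝ) < s := by exact_mod_cast hs
  rw [coeff_comp_C_mul_X, abs_mul, abs_pow, abs_inv, abs_of_pos hs0]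
  have h1 := Epoly_coeff_abs ℓ i
  have h2 : ((s:ℝ)⁻¹) ^ i = 1 / (s:ℝ) ^ i := by
    rw [inv_pow, one_div]
  rw [h2]
  calc |(Epoly ℓ).coeff i| * (1 / (s:ℝ)^i) ≤ (1 / (Nat.factorial i : ℝ)) * (1 / (s:ℝ)^i) := by
        apply mul_le_mul_of_nonneg_right h1
        positivity
    _ = 1 / ((Nat.factorial i : ℝ) * s ^ i) := by
        rw [div_mul_div_comm, one_mul]

lemma binom_sum (x : ℝ) (j : ℕ) :
    ∑ p ∈ Finset.HasAntidiagonal.antidiagonal j, x ^ p.2 / ((Nat.factorial p.1 : ℝ) * Nat.factorial p.2)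
      = (1 + x) ^ j / Nat.factorial j := by
  rw [Finset.Nat.sum_antidiagonal_eq_sum_range_succ_mk, add_pow]
  rw [Finset.sum_div]
  apply Finset.sum_congr rfl
  intro i hi
  rw [Finset.mem_range, Nat.lt_succ_iff] at hi
  rw [one_pow, one_mul]
  rw [Nat.cast_choose ℝ hi]
  have h1 : (Nat.factorial i : ℝ) ≠ 0 := by positivity
  have h2 : (Nat.factorial (j - i) : ℝ) ≠ 0 := by positivity
  have h3 : (Nat.factorial j : ℝ) ≠ 0 := by positivity
  field_simp

lemma T_comp_bound (s ℓ : ℕ) (hs : 1 ≤ s) (t : ℕ) (j : ℕ) :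
    |((Polynomial.Chebyshev.T ℝ (t : ℤ)).comp
        ((Epoly ℓ).comp (C ((s:ℝ))⁻¹ * X))).coeff j|
      ≤ 3 ^ t * (t : ℝ) ^ j / ((Nat.factorial j : ℝ) * s ^ j) := by
  have hs0 : (0:ℝ) < s := by exact_mod_cast hs
  set A : ℝ[X] := (Epoly ℓ).comp (C ((s:ℝ))⁻¹ * X) with hA
  induction t using Nat.twoStepInduction generalizing j with
  | zero =>
    simp only [Nat.cast_zero, Polynomial.Chebyshev.T_zero, one_comp, coeff_one]
    rcases Nat.eq_zero_or_pos j with h | h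
    · subst h; simp
    · rw [if_neg (by omega)]
      simp [abs_zero]
      positivity
  | one =>
    simp only [Nat.cast_one, Polynomial.Chebyshev.T_one, X_comp]
    calc |A.coeff j| ≤ 1 / ((Nat.factorial j : ℝ) * s ^ j) := A_coeff_abs s ℓ hs j
      _ ≤ 3 ^ 1 * (1:ℝ) ^ j / ((Nat.factorial j : ℝ) * s ^ j) := by
          rw [one_pow, mul_one, pow_one]
          have hD : (0:ℝ) < (Nat.factorial j : ℝ) * s ^ j := by positivity
          gcongr
          norm_num
  | more t ih0 ih1 =>
    have hT : (Polynomial.Chebyshev.T ℝ ((t+2 : ℕ) : ℤ))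
        = 2 * X * Polynomial.Chebyshev.T ℝ ((t+1 : ℕ) : ℤ)
          - Polynomial.Chebyshev.T ℝ (t : ℤ) := by
      push_cast
      exact Polynomial.Chebyshev.T_add_two ℝ t
    set P : ℝ[X] := (Polynomial.Chebyshev.T ℝ ((t+1 : ℕ) : ℤ)).comp A with hP
    set R : ℝ[X] := (Polynomial.Chebyshev.T ℝ (t : ℤ)).comp A with hR
    have hcomp : (Polynomial.Chebyshev.T ℝ ((t+2 : ℕ) : ℤ)).comp A
        = C 2 * (A * P) - R := by
      have hC2 : (C (2:ℝ) : ℝ[X]) = 2 := map_ofNat C 2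
      rw [hP, hR, hT, sub_comp, mul_comp, mul_comp, ofNat_comp, X_comp, mul_assoc, hC2]
      norm_cast
    rw [hcomp, coeff_sub, coeff_C_mul]
    have hbP : ∀ m, |P.coeff m| ≤ 3 ^ (t+1) * ((t:ℝ)+1) ^ m / ((Nat.factorial m : ℝ) * s ^ m) := by
      intro m
      have := ih1 m
      push_cast at this ⊢
      exact this
    have hbR : |R.coeff j| ≤ 3 ^ t * (t:ℝ) ^ j / ((Nat.factorial j : ℝ) * s ^ j) := ih0 j
    have hAP : |(A * P).coeff j| ≤ 3 ^ (t+1) * ((t:ℝ)+2) ^ j / ((Nat.factorial j : ℝ) * s ^ j) := by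
      rw [coeff_mul]
      calc |∑ p ∈ Finset.HasAntidiagonal.antidiagonal j, A.coeff p.1 * P.coeff p.2|
          ≤ ∑ p ∈ Finset.HasAntidiagonal.antidiagonal j, |A.coeff p.1 * P.coeff p.2| :=
            Finset.abs_sum_le_sum_abs _ _
        _ ≤ ∑ p ∈ Finset.HasAntidiagonal.antidiagonal j,
              (3 ^ (t+1) / (s:ℝ) ^ j) * (((t:ℝ)+1) ^ p.2 / ((Nat.factorial p.1 : ℝ) * Nat.factorial p.2)) := by
            apply Finset.sum_le_sum
            intro p hp
            rw [Finset.HasAntidiagonal.mem_antidiagonal] at hp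
            rw [abs_mul]
            calc |A.coeff p.1| * |P.coeff p.2|
                ≤ (1 / ((Nat.factorial p.1 : ℝ) * s ^ p.1)) *
                  (3 ^ (t+1) * ((t:ℝ)+1) ^ p.2 / ((Nat.factorial p.2 : ℝ) * s ^ p.2)) := by
                  apply mul_le_mul (A_coeff_abs s ℓ hs p.1) (hbP p.2) (abs_nonneg _) (by positivity)
              _ = (3 ^ (t+1) / (s:ℝ) ^ j) * (((t:ℝ)+1) ^ p.2 / ((Nat.factorial p.1 : ℝ) * Nat.factorial p.2)) := by
                  rw [← hp, pow_add]
                  field_simp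
                  ring
        _ = (3 ^ (t+1) / (s:ℝ) ^ j) * ((1 + ((t:ℝ)+1)) ^ j / Nat.factorial j) := by
            rw [← Finset.mul_sum, binom_sum]
        _ ≤ 3 ^ (t+1) * ((t:ℝ)+2) ^ j / ((Nat.factorial j : ℝ) * s ^ j) := by
            have : (1 + ((t:ℝ)+1)) = ((t:ℝ)+2) := by ring
            rw [this, div_mul_div_comm, mul_comm ((s:ℝ) ^ j) ((Nat.factorial j : ℝ))]
    calc |2 * (A * P).coeff j - R.coeff j| ≤ 2 * |(A * P).coeff j| + |R.coeff j| := by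
          calc |2 * (A * P).coeff j - R.coeff j|
              ≤ |2 * (A * P).coeff j| + |R.coeff j| := abs_sub _ _
            _ = 2 * |(A * P).coeff j| + |R.coeff j| := by rw [abs_mul, abs_two]
      _ ≤ 2 * (3 ^ (t+1) * ((t:ℝ)+2) ^ j / ((Nat.factorial j : ℝ) * s ^ j))
            + 3 ^ t * (t:ℝ) ^ j / ((Nat.factorial j : ℝ) * s ^ j) := by
          gcongr
      _ ≤ 3 ^ (t+2) * ((t:ℝ)+2) ^ j / ((Nat.factorial j : ℝ) * s ^ j) := by
          have htj : (t:ℝ) ^ j ≤ ((t:ℝ)+2) ^ j := by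
            apply pow_le_pow_left₀ (by positivity) (by linarith)
          have hD : (0:ℝ) < (Nat.factorial j : ℝ) * s ^ j := by positivity
          rw [← mul_div_assoc, ← add_div]
          have key : 2 * (3 ^ (t+1) * ((t:ℝ)+2) ^ j) + 3 ^ t * (t:ℝ) ^ j
              ≤ 3 ^ (t+2) * ((t:ℝ)+2) ^ j := by
            have h3 : (3:ℝ) ^ t * (t:ℝ) ^ j ≤ 3 ^ t * ((t:ℝ)+2) ^ j := by
              apply mul_le_mul_of_nonneg_left htj (by positivity)
            have hX : (0:ℝ) ≤ 3 ^ t * ((t:ℝ)+2) ^ j := by positivity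
            have e1 : (3:ℝ) ^ (t+1) = 3 * 3 ^ t := by ring
            have e2 : (3:ℝ) ^ (t+2) = 9 * 3 ^ t := by ring
            rw [e1, e2]
            nlinarith [h3, hX]
          gcongr
      _ = 3 ^ (t+2) * (((t+2:ℕ) : ℝ)) ^ j / ((Nat.factorial j : ℝ) * s ^ j) := by push_cast; ring



lemma sum_comp' {ι : Type*} (u : Finset ι) (f : ι → ℝ[X]) (q : ℝ[X]) :
    (∑ i ∈ u, f i).comp q = ∑ i ∈ u, (f i).comp q :=
  Polynomial.eval₂_finset_sum _ _ _ _

/-- For s ≥ 1, 0 ≤ r ≤ s, and any j ≥ 0, the coefficient of x^j in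
Q(x) := G_{r,s}(E_ℓ(x/s)) is at most 5^r·(r/s)^j / j! in absolute value. -/
theorem Q_coeff_bound (r s ℓ : ℕ) (hs : 1 ≤ s) (hrs : r ≤ s) (j : ℕ) :
    |(Q r s ℓ).coeff j| ≤ 5 ^ r * ((r : ℝ) / s) ^ j / (Nat.factorial j) := by
  have hs0 : (0:ℝ) < s := by exact_mod_cast hs
  set A : ℝ[X] := (Epoly ℓ).comp (C ((s:ℝ))⁻¹ * X) with hA
  set B : ℝ := 3 ^ r * (r:ℝ) ^ j / ((Nat.factorial j : ℝ) * s ^ j) with hBdef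
  have hB : (0:ℝ) ≤ B := by rw [hBdef]; positivity
  have hterm : ∀ i ∈ Finset.range (s+1),
      |(((s.choose i : ℝ) • (if |2*(i:ℤ) - (s:ℤ)| ≤ (r:ℤ) then Phi (2*i - s) else 0)).comp A).coeff j|
        ≤ (s.choose i : ℝ) * B := by
    intro i _
    rw [smul_comp, coeff_smul, smul_eq_mul, abs_mul, Nat.abs_cast]
    apply mul_le_mul_of_nonneg_left ?_ (Nat.cast_nonneg _)
    split_ifs with hcond
    · set t : ℕ := (2*(i:ℤ) - s).natAbs with htdef
      have ht : t ≤ r := by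
        rw [Int.abs_eq_natAbs] at hcond
        omega
      have hTt : Phi (2*(i:ℤ) - s) = Polynomial.Chebyshev.T ℝ (t : ℤ) := by
        rw [Phi]
        rcases Int.natAbs_eq (2*(i:ℤ) - (s:ℤ)) with h | h
        · rw [← htdef] at h; rw [← h]
        · rw [← htdef] at h; rw [h, Polynomial.Chebyshev.T_neg]
      rw [hTt, hBdef]
      calc |((Polynomial.Chebyshev.T ℝ (t:ℤ)).comp A).coeff j|
          ≤ 3 ^ t * (t:ℝ) ^ j / ((Nat.factorial j : ℝ) * s ^ j) := T_comp_bound s ℓ hs t j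
        _ ≤ 3 ^ r * (r:ℝ) ^ j / ((Nat.factorial j : ℝ) * s ^ j) := by
            gcongr <;> first
              | norm_num
              | exact_mod_cast ht
              | exact Nat.cast_nonneg t
    · simp only [zero_comp, coeff_zero, abs_zero]
      exact hB
  have hQc : |(Q r s ℓ).coeff j| ≤ ((2:ℝ) ^ s)⁻¹ * ((2:ℝ) ^ s * B) := by
    rw [Q, G, smul_comp, coeff_smul, smul_eq_mul, abs_mul,
      abs_of_pos (by positivity : (0:ℝ) < ((2:ℝ)^s)⁻¹)]
    apply mul_le_mul_of_nonneg_left ?_ (by positivity)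
    rw [sum_comp', finset_sum_coeff]
    calc |∑ i ∈ Finset.range (s+1),
            (((s.choose i : ℝ) • (if |2*(i:ℤ) - (s:ℤ)| ≤ (r:ℤ) then Phi (2*i - s) else 0)).comp A).coeff j|
        ≤ ∑ i ∈ Finset.range (s+1),
            |(((s.choose i : ℝ) • (if |2*(i:ℤ) - (s:ℤ)| ≤ (r:ℤ) then Phi (2*i - s) else 0)).comp A).coeff j| :=
          Finset.abs_sum_le_sum_abs _ _
      _ ≤ ∑ i ∈ Finset.range (s+1), (s.choose i : ℝ) * B := Finset.sum_le_sum hterm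
      _ = (2:ℝ) ^ s * B := by
          rw [← Finset.sum_mul]
          congr 1
          rw [← Nat.cast_sum]
          rw [Nat.sum_range_choose]
          push_cast
          ring
  calc |(Q r s ℓ).coeff j| ≤ ((2:ℝ) ^ s)⁻¹ * ((2:ℝ) ^ s * B) := hQc
    _ = B := by rw [← mul_assoc, inv_mul_cancel₀ (by positivity), one_mul]
    _ ≤ 5 ^ r * ((r : ℝ) / s) ^ j / (Nat.factorial j) := by
        rw [hBdef, div_pow]
        have h1 : (3:ℝ) ^ r * (r:ℝ) ^ j / ((Nat.factorial j : ℝ) * s ^ j)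
            = 3 ^ r * ((r:ℝ) ^ j / (s:ℝ) ^ j / (Nat.factorial j : ℝ)) := by
          ring
        have h2 : (5:ℝ) ^ r * ((r:ℝ) ^ j / (s:ℝ) ^ j) / (Nat.factorial j : ℝ)
            = 5 ^ r * ((r:ℝ) ^ j / (s:ℝ) ^ j / (Nat.factorial j : ℝ)) := by
          ring
        rw [h1, h2]
        apply mul_le_mul_of_nonneg_right ?_ (by positivity)
        apply pow_le_pow_left₀ (by norm_num) (by norm_num)
end
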